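/- arXiv:1812.01426 — 8 statements merged into one kernel-verified Lean document; each statement's English description precedes it below -/
import Mathlib

section
/- Let f ∈ E with θ_f ≥ 0 and let U ⊆ V induce a connected subgraph of G with f ∈ δ(U). If θ_f ≥ Σ_{e ∈ δ(U) \ {f}} |θ_e|, then there exists an optimal solution x* of the multicut problem min_{x ∈ MC(G)} ⟨θ, x⟩ with x*_f = 0. -/
variable {V : Type} [Fintype V] [DecidableEq V]

/-- The set of edges of `G` with one endpoint in `U` and the other in `W` (δ(U, W)). -/
def btw (G : SimpleGraph V) [DecidableRel G.Adj] (U W : Finset V) : Finset (Sym2 V) :=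
  G.edgeFinset.filter fun e => ∃ x ∈ U, ∃ y ∈ W, e = s(x, y)

/-- The cut δ(U) := δ(U, V \ U). -/
def cutδ (G : SimpleGraph V) [DecidableRel G.Adj] (U : Finset V) : Finset (Sym2 V) :=
  btw G U Uᶜ

/-- `M` is (the edge set of) a multicut of `G`. -/
def IsMulticut (G : SimpleGraph V) [DecidableRel G.Adj] (M : Finset (Sym2 V)) : Prop :=
  M ⊆ G.edgeFinset ∧ ∃ f : V → V, ∀ x y, G.Adj x y → (s(x, y) ∈ M ↔ f x ≠ f y)

/-! Take an optimal partition. If it separates the endpoints `u ∈ U`, `v ∉ U` of `f`, merge the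
part of the class of `u` inside `U` with the part of the class of `v` outside `U`, splitting every
other class along `U`. Only edges of `δ(U)` change status: `f` becomes uncut, which saves `θ f`,
and each other edge of `δ(U)` costs at most `|θ e|` more, so the new multicut is still optimal. -/

theorem Finset.sum_le_sum_sub_add_sum_abs {ι : Type*} [DecidableEq ι] (θ : ι → ℝ)
    {M N D : Finset ι} {f : ι} (hMN : M \ D = N \ D) (hfD : f ∈ D) (hfM : f ∉ M)
    (hfN : f ∈ N) :
    ∑ e ∈ M, θ e ≤ ∑ e ∈ N, θ e - θ f + ∑ e ∈ D.erase f, |θ e| := by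
  have hsplit (S : Finset ι) :
      ∑ e ∈ S, θ e = ∑ e ∈ S \ D, θ e + ∑ e ∈ D, if e ∈ S then θ e else 0 := by
    rw [← Finset.sum_filter, Finset.filter_mem_eq_inter, Finset.inter_comm, add_comm,
      Finset.sum_inter_add_sum_sdiff]
  rw [hsplit M, hsplit N, hMN, ← Finset.add_sum_erase D _ hfD,
    ← Finset.add_sum_erase D _ hfD, if_neg hfM, if_pos hfN]
  have hpointwise : ∀ e ∈ D.erase f,
      (if e ∈ M then θ e else 0) ≤ (if e ∈ N then θ e else 0) + |θ e| := by
    intro e _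
    split_ifs <;> linarith [le_abs_self (θ e), neg_abs_le (θ e), abs_nonneg (θ e)]
  have := Finset.sum_le_sum hpointwise
  rw [Finset.sum_add_distrib] at this
  linarith

section Labeling

variable {W α : Type*} [DecidableEq α]

def cutEdges [Fintype W] (G : SimpleGraph W) [DecidableRel G.Adj] (l : W → α) :
    Finset (Sym2 W) :=
  G.edgeFinset.filter fun e => ¬(e.map l).IsDiag

theorem mk_mem_cutEdges_iff [Fintype W] (G : SimpleGraph W) [DecidableRel G.Adj] (l : W → α)
    (x y : W) : s(x, y) ∈ cutEdges G l ↔ G.Adj x y ∧ l x ≠ l y := by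
  simp [cutEdges]

/-- Relabel `g` so that the part of the class of `u` inside `U` and the part of the class of `v`
outside `U` form one class, while the rest of each class is split along `U`. -/
def glueAcross [DecidableEq W] (U : Finset W) (g : W → α) (u v x : W) : Option (α ⊕ α) :=
  if x ∈ U then (if g x = g u then none else some (.inl (g x)))
  else (if g x = g v then none else some (.inr (g x)))

variable [DecidableEq W] {U : Finset W} {g : W → α} {u v : W}

theorem glueAcross_eq_iff {x y : W} (hxy : x ∈ U ↔ y ∈ U) :
    glueAcross U g u v x = glueAcross U g u v y ↔ g x = g y := by
  unfold glueAcross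
  split_ifs <;> grind

theorem glueAcross_eq_of_mem_of_notMem (hu : u ∈ U) (hv : v ∉ U) :
    glueAcross U g u v u = glueAcross U g u v v := by
  simp [glueAcross, hu, hv]

end Labeling

section Multicut

variable {W : Type} [Fintype W] {G : SimpleGraph W} [DecidableRel G.Adj]

theorem isMulticut_cutEdges {α : Type*} [DecidableEq α] (l : W → α) :
    IsMulticut G (cutEdges G l) := by
  refine ⟨Finset.filter_subset _ _, fun x => (⟦x⟧ : Quotient (Setoid.ker l)).out,
    fun x y hxy => ?_⟩
  rw [mk_mem_cutEdges_iff, and_iff_right hxy]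
  refine not_congr ⟨fun h => ?_, fun h => ?_⟩
  · exact congrArg Quotient.out (Quotient.sound (s := Setoid.ker l) h)
  · rw [← Setoid.ker_apply_mk_out (f := l) x, ← Setoid.ker_apply_mk_out (f := l) y]
    exact congrArg l h

theorem isMulticut_iff_exists_eq_cutEdges [DecidableEq W] {M : Finset (Sym2 W)} :
    IsMulticut G M ↔ ∃ g : W → W, M = cutEdges G g := by
  refine ⟨fun ⟨hM, g, hg⟩ => ⟨g, ?_⟩, fun ⟨g, hg⟩ => hg ▸ isMulticut_cutEdges g⟩
  ext e
  induction e using Sym2.ind with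
  | _ x y =>
    rw [mk_mem_cutEdges_iff]
    refine ⟨fun he => ?_, fun ⟨hxy, hne⟩ => (hg x y hxy).mpr hne⟩
    have hxy : G.Adj x y := G.mem_edgeFinset.mp (hM he)
    exact ⟨hxy, (hg x y hxy).mp he⟩

theorem mk_mem_cutδ [DecidableEq W] {U : Finset W} {x y : W} (hxy : G.Adj x y) (hx : x ∈ U)
    (hy : y ∉ U) :
    s(x, y) ∈ cutδ G U :=
  Finset.mem_filter.mpr ⟨G.mem_edgeFinset.mpr hxy, x, hx, y, Finset.mem_compl.mpr hy, rfl⟩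

theorem cutEdges_sdiff_cutδ_eq [DecidableEq W] {α β : Type*} [DecidableEq α] [DecidableEq β]
    {U : Finset W} {l : W → α} {l' : W → β}
    (h : ∀ x y, (x ∈ U ↔ y ∈ U) → (l x = l y ↔ l' x = l' y)) :
    cutEdges G l \ cutδ G U = cutEdges G l' \ cutδ G U := by
  ext e
  induction e using Sym2.ind with
  | _ x y =>
    simp only [Finset.mem_sdiff, mk_mem_cutEdges_iff, and_congr_left_iff, and_congr_right_iff]
    intro hcut hxy
    refine not_congr (h x y ?_)
    by_cases hx : x ∈ U <;> by_cases hy : y ∈ U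
    · exact iff_of_true hx hy
    · exact absurd (mk_mem_cutδ hxy hx hy) hcut
    · exact absurd (Sym2.eq_swap ▸ mk_mem_cutδ hxy.symm hy hx) hcut
    · exact iff_of_false hx hy

theorem exists_isMulticut_notMem_sum_le [DecidableEq W] {α : Type*} [DecidableEq α]
    (θ : Sym2 W → ℝ) (g : W → α) {f : Sym2 W} {U : Finset W} (hfδ : f ∈ cutδ G U)
    (hcrit : ∑ e ∈ (cutδ G U).erase f, |θ e| ≤ θ f) :
    ∃ M, IsMulticut G M ∧ f ∉ M ∧ ∑ e ∈ M, θ e ≤ ∑ e ∈ cutEdges G g, θ e := by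
  obtain ⟨hfE, u, hu, v, hv, rfl⟩ := Finset.mem_filter.mp hfδ
  have huv : G.Adj u v := G.mem_edgeFinset.mp hfE
  by_cases hg : g u = g v
  · exact ⟨cutEdges G g, isMulticut_cutEdges g,
      fun hf => ((mk_mem_cutEdges_iff G g u v).mp hf).2 hg, le_rfl⟩
  have hfM : s(u, v) ∉ cutEdges G (glueAcross U g u v) := fun hf =>
    ((mk_mem_cutEdges_iff G _ u v).mp hf).2 (glueAcross_eq_of_mem_of_notMem hu (by simpa using hv))
  have hoff : cutEdges G (glueAcross U g u v) \ cutδ G U = cutEdges G g \ cutδ G U :=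
    cutEdges_sdiff_cutδ_eq fun x y hxy => glueAcross_eq_iff hxy
  have hcost := Finset.sum_le_sum_sub_add_sum_abs θ hoff hfδ hfM
    ((mk_mem_cutEdges_iff G g u v).mpr ⟨huv, hg⟩)
  exact ⟨_, isMulticut_cutEdges _, hfM, by linarith⟩

end Multicut

theorem stmt_3_general (G : SimpleGraph V) [DecidableRel G.Adj] (θ : Sym2 V → ℝ)
    (f : Sym2 V)
    (U : Finset V)
    (hfδ : f ∈ cutδ G U)
    (hcrit : ∑ e ∈ (cutδ G U).erase f, |θ e| ≤ θ f) :
    ∃ M, IsMulticut G M ∧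
      (∀ N, IsMulticut G N → ∑ e ∈ M, θ e ≤ ∑ e ∈ N, θ e) ∧ f ∉ M := by
  have : Nonempty (V → V) := ⟨id⟩
  obtain ⟨g, hg⟩ := Finite.exists_min fun g : V → V => ∑ e ∈ cutEdges G g, θ e
  obtain ⟨M, hM, hfM, hMg⟩ := exists_isMulticut_notMem_sum_le θ g hfδ hcrit
  refine ⟨M, hM, fun N hN => ?_, hfM⟩
  obtain ⟨g', rfl⟩ := isMulticut_iff_exists_eq_cutEdges.mp hN
  exact hMg.trans (hg g')

/-- edge criterion for multicut, case `θ_f ≥ 0` (persistency `x*_f = 0`). -/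
theorem stmt_3 (G : SimpleGraph V) [DecidableRel G.Adj] (θ : Sym2 V → ℝ)
    (f : Sym2 V) (hf : f ∈ G.edgeFinset) (hθf : 0 ≤ θ f)
    (U : Finset V) (hUconn : (G.induce (U : Set V)).Connected)
    (hfδ : f ∈ cutδ G U)
    (hcrit : ∑ e ∈ (cutδ G U).erase f, |θ e| ≤ θ f) :
    ∃ M, IsMulticut G M ∧
      (∀ N, IsMulticut G N → ∑ e ∈ M, θ e ≤ ∑ e ∈ N, θ e) ∧ f ∉ M :=
  stmt_3_general G θ f U hfδ hcrit
end

section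
/- Let f ∈ E with θ_f < 0 and let U ⊆ V induce a connected subgraph of G with f ∈ δ(U). If |θ_f| ≥ Σ_{e ∈ δ(U) ∩ E⁺} θ_e, then there exists an optimal solution x* of the multicut problem min_{x ∈ MC(G)} ⟨θ, x⟩ with x*_f = 1. -/
variable {V : Type} [Fintype V] [DecidableEq V]

private lemma min'_congr' {α : Type*} [LinearOrder α] {s t : Finset α} (h : s = t)
    (hs : s.Nonempty) (ht : t.Nonempty) : s.min' hs = t.min' ht := by subst h; rfl

/-- edge criterion for multicut, case `θ_f < 0` (persistency `x*_f = 1`).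
The right-hand side sums over `δ(U) ∩ E⁺`, the nonnegative-weight edges of the cut. -/
theorem stmt_4 (G : SimpleGraph V) [DecidableRel G.Adj] (θ : Sym2 V → ℝ)
    (f : Sym2 V) (hf : f ∈ G.edgeFinset) (hθf : θ f < 0)
    (U : Finset V) (hUconn : (G.induce (U : Set V)).Connected)
    (hfδ : f ∈ cutδ G U)
    (hcrit : ∑ e ∈ (cutδ G U).filter (fun e => 0 ≤ θ e), θ e ≤ |θ f|) :
    ∃ M, IsMulticut G M ∧
      (∀ N, IsMulticut G N → ∑ e ∈ M, θ e ≤ ∑ e ∈ N, θ e) ∧ f ∈ M := by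
  classical
  set D := cutδ G U with hDdef
  have hDsub : D ⊆ G.edgeFinset := by
    rw [hDdef]; unfold cutδ _root_.btw; exact Finset.filter_subset _ _
  -- an optimal multicut exists
  have hfull : IsMulticut G G.edgeFinset := by
    refine ⟨subset_rfl, id, fun x y hxy => ?_⟩
    simp [SimpleGraph.mem_edgeFinset, hxy, hxy.ne]
  obtain ⟨N, hNmem, hNmin⟩ :=
    Finset.exists_min_image ((G.edgeFinset.powerset).filter (IsMulticut G))
      (fun M => ∑ e ∈ M, θ e)
      ⟨G.edgeFinset, Finset.mem_filter.mpr ⟨Finset.mem_powerset.mpr subset_rfl, hfull⟩⟩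
  have hNcut : IsMulticut G N := (Finset.mem_filter.mp hNmem).2
  have hmin : ∀ K, IsMulticut G K → ∑ e ∈ N, θ e ≤ ∑ e ∈ K, θ e := fun K hK =>
    hNmin K (Finset.mem_filter.mpr ⟨Finset.mem_powerset.mpr hK.1, hK⟩)
  by_cases hfN : f ∈ N
  · exact ⟨N, hNcut, hmin, hfN⟩
  obtain ⟨hNsub, g, hg⟩ := hNcut
  letI : LinearOrder V := LinearOrder.lift' (Fintype.equivFin V) (Fintype.equivFin V).injective
  set cls : V → Finset V :=
    fun v => Finset.univ.filter (fun w => g w = g v ∧ ((w ∈ U) ↔ (v ∈ U))) with hclsdef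
  have hclsmem : ∀ v, v ∈ cls v := fun v => by simp [hclsdef]
  have hne : ∀ v, (cls v).Nonempty := fun v => ⟨v, hclsmem v⟩
  set h : V → V := fun v => (cls v).min' (hne v) with hhdef
  have hkey : ∀ x y, h x = h y ↔ (g x = g y ∧ ((x ∈ U) ↔ (y ∈ U))) := by
    intro x y
    constructor
    · intro hxy
      have h1 : h x ∈ cls x := Finset.min'_mem _ _
      have h2 : h y ∈ cls y := Finset.min'_mem _ _
      rw [hxy] at h1
      have h1' := (Finset.mem_filter.mp h1).2
      have h2' := (Finset.mem_filter.mp h2).2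
      exact ⟨h1'.1.symm.trans h2'.1, h1'.2.symm.trans h2'.2⟩
    · rintro ⟨hgg, hUU⟩
      have hcls : cls x = cls y := by
        ext w
        simp only [hclsdef, Finset.mem_filter, Finset.mem_univ, true_and]
        constructor
        · rintro ⟨h1, h2⟩; exact ⟨h1.trans hgg, h2.trans hUU⟩
        · rintro ⟨h1, h2⟩; exact ⟨h1.trans hgg.symm, h2.trans hUU.symm⟩
      exact min'_congr' hcls (hne x) (hne y)
  set M' : Finset (Sym2 V) :=
    G.edgeFinset.filter (fun e => ∃ x y, e = s(x, y) ∧ h x ≠ h y) with hM'def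
  have hM'sub : M' ⊆ G.edgeFinset := by rw [hM'def]; exact Finset.filter_subset _ _
  have hM'mem : ∀ x y, G.Adj x y → (s(x, y) ∈ M' ↔ h x ≠ h y) := by
    intro x y hxy
    rw [hM'def, Finset.mem_filter]
    constructor
    · rintro ⟨-, a, b, heq, hab⟩
      rcases Sym2.eq_iff.mp heq with ⟨rfl, rfl⟩ | ⟨rfl, rfl⟩
      · exact hab
      · exact fun hc => hab hc.symm
    · intro hne'
      exact ⟨SimpleGraph.mem_edgeFinset.mpr hxy, x, y, rfl, hne'⟩
  have hM'cut : IsMulticut G M' := ⟨hM'sub, h, hM'mem⟩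
  have hDmem : ∀ x y, G.Adj x y → (s(x, y) ∈ D ↔ ¬((x ∈ U) ↔ (y ∈ U))) := by
    intro x y hxy
    rw [hDdef]
    unfold cutδ _root_.btw
    rw [Finset.mem_filter]
    constructor
    · rintro ⟨-, a, ha, b, hb, heq⟩
      rw [Finset.mem_compl] at hb
      rcases Sym2.eq_iff.mp heq with ⟨rfl, rfl⟩ | ⟨rfl, rfl⟩
      · intro hiff; exact hb (hiff.mp ha)
      · intro hiff; exact hb (hiff.mpr ha)
    · intro hiff
      refine ⟨SimpleGraph.mem_edgeFinset.mpr hxy, ?_⟩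
      by_cases hx : x ∈ U
      · have hy : y ∉ U := fun hy => hiff ⟨fun _ => hy, fun _ => hx⟩
        exact ⟨x, hx, y, Finset.mem_compl.mpr hy, rfl⟩
      · have hy : y ∈ U := by
          by_contra hy
          exact hiff ⟨fun c => absurd c hx, fun c => absurd c hy⟩
        exact ⟨y, hy, x, Finset.mem_compl.mpr hx, Sym2.eq_swap⟩
  have hM'eq : M' = N ∪ D := by
    ext e
    induction e with
    | h x y =>
      by_cases hadj : G.Adj x y
      · rw [Finset.mem_union, hM'mem x y hadj, hg x y hadj, hDmem x y hadj]
        simp only [ne_eq, hkey x y]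
        tauto
      · have h1 : s(x, y) ∉ G.edgeFinset := fun hc =>
          hadj (by simpa [SimpleGraph.mem_edgeFinset] using hc)
        have hnM : s(x, y) ∉ M' := fun hc => h1 (hM'sub hc)
        have hnN : s(x, y) ∉ N := fun hc => h1 (hNsub hc)
        have hnD : s(x, y) ∉ D := fun hc => h1 (hDsub hc)
        simp [hnM, hnN, hnD]
  have hsum : ∑ e ∈ M', θ e ≤ ∑ e ∈ N, θ e := by
    have h1 : ∑ e ∈ M', θ e + ∑ e ∈ N ∩ D, θ e = ∑ e ∈ N, θ e + ∑ e ∈ D, θ e := by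
      rw [hM'eq]; exact Finset.sum_union_inter
    have h2 : ∑ e ∈ D ∩ N, θ e + ∑ e ∈ D \ N, θ e = ∑ e ∈ D, θ e :=
      Finset.sum_inter_add_sum_sdiff _ _ _
    have hfDN : f ∈ D \ N := Finset.mem_sdiff.mpr ⟨hfδ, hfN⟩
    have h3 : θ f + ∑ e ∈ (D \ N).erase f, θ e = ∑ e ∈ D \ N, θ e :=
      Finset.add_sum_erase _ _ hfDN
    set S := (D \ N).erase f with hSdef
    have h4 : ∑ e ∈ S, θ e ≤ ∑ e ∈ S.filter (fun e => 0 ≤ θ e), θ e := by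
      have hsp := Finset.sum_filter_add_sum_filter_not S (fun e => 0 ≤ θ e) θ
      have hnp : ∑ e ∈ S.filter (fun e => ¬ 0 ≤ θ e), θ e ≤ 0 :=
        Finset.sum_nonpos (fun e he => le_of_lt (lt_of_not_ge (Finset.mem_filter.mp he).2))
      linarith
    have h5 : ∑ e ∈ S.filter (fun e => 0 ≤ θ e), θ e ≤ ∑ e ∈ D.filter (fun e => 0 ≤ θ e), θ e := by
      apply Finset.sum_le_sum_of_subset_of_nonneg
      · exact Finset.filter_subset_filter _
          ((Finset.erase_subset _ _).trans Finset.sdiff_subset)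
      · intro e he _
        exact (Finset.mem_filter.mp he).2
    have h6 : ∑ e ∈ D.filter (fun e => 0 ≤ θ e), θ e ≤ -θ f := by
      rwa [abs_of_neg hθf] at hcrit
    have hinter : ∑ e ∈ N ∩ D, θ e = ∑ e ∈ D ∩ N, θ e := by rw [Finset.inter_comm]
    linarith
  have hfM' : f ∈ M' := by
    have hfd := hfδ
    rw [hDdef] at hfd
    unfold cutδ _root_.btw at hfd
    obtain ⟨-, x, hx, y, hy, heq⟩ := Finset.mem_filter.mp hfd
    rw [Finset.mem_compl] at hy
    rw [hM'def]
    refine Finset.mem_filter.mpr ⟨hf, x, y, heq, fun hc => ?_⟩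
    exact hy (((hkey x y).mp hc).2.mp hx)
  exact ⟨M', hM'cut, fun K hK => le_trans hsum (hmin K hK), hfM'⟩
end

section
/- Let f ∈ E and let U ⊆ V induce a connected subgraph of G with f ∈ δ(U). Set β := 0 if θ_f ≥ 0 and β := 1 if θ_f < 0. If |θ_f| ≥ Σ_{e ∈ δ(U) \ {f}} |θ_e|, then there exists an optimal solution x* of the max-cut problem min_{x ∈ CUT(G)} ⟨θ, x⟩ with x*_f = β. -/
variable {V : Type} [Fintype V] [DecidableEq V]

/-- `M` is (the edge set of) a cut of `G`, i.e. `M = δ(U)` for some `U ⊆ V`. -/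
def IsCut (G : SimpleGraph V) [DecidableRel G.Adj] (M : Finset (Sym2 V)) : Prop :=
  M ⊆ G.edgeFinset ∧ ∃ U : Finset V, ∀ x y, G.Adj x y → (s(x, y) ∈ M ↔ (x ∈ U ↔ y ∉ U))

lemma mem_cutδ (G : SimpleGraph V) [DecidableRel G.Adj] (W : Finset V) {x y : V}
    (h : G.Adj x y) : s(x,y) ∈ cutδ G W ↔ (x ∈ W ↔ y ∉ W) := by
  unfold cutδ _root_.btw
  simp only [Finset.mem_filter, SimpleGraph.mem_edgeFinset, SimpleGraph.mem_edgeSet,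
    Finset.mem_compl]
  constructor
  · rintro ⟨-, a, ha, b, hb, hab⟩
    rw [Sym2.eq_iff] at hab
    rcases hab with ⟨rfl, rfl⟩ | ⟨rfl, rfl⟩ <;> tauto
  · intro hxy
    refine ⟨h, ?_⟩
    by_cases hx : x ∈ W
    · exact ⟨x, hx, y, by tauto, rfl⟩
    · exact ⟨y, by tauto, x, hx, Sym2.eq_swap⟩

lemma cutδ_subset (G : SimpleGraph V) [DecidableRel G.Adj] (W : Finset V) :
    cutδ G W ⊆ G.edgeFinset := Finset.filter_subset _ _

lemma isCut_cutδ (G : SimpleGraph V) [DecidableRel G.Adj] (W : Finset V) :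
    IsCut G (cutδ G W) :=
  ⟨cutδ_subset G W, W, fun _ _ h => mem_cutδ G W h⟩

lemma IsCut.eq_cutδ {G : SimpleGraph V} [DecidableRel G.Adj] {M : Finset (Sym2 V)}
    (h : IsCut G M) : ∃ W, M = cutδ G W := by
  obtain ⟨hsub, W, hW⟩ := h
  refine ⟨W, ?_⟩
  ext e
  induction e using Sym2.inductionOn with
  | hf x y =>
    constructor
    · intro he
      have hadj : G.Adj x y := by simpa using hsub he
      exact (mem_cutδ G W hadj).mpr ((hW x y hadj).mp he)
    · intro he
      have hadj : G.Adj x y := by simpa using cutδ_subset G W he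
      exact (hW x y hadj).mpr ((mem_cutδ G W hadj).mp he)

lemma cutδ_symmDiff (G : SimpleGraph V) [DecidableRel G.Adj] (W U : Finset V) :
    cutδ G (symmDiff W U) = (cutδ G W \ cutδ G U) ∪ (cutδ G U \ cutδ G W) := by
  ext e
  induction e using Sym2.inductionOn with
  | hf x y =>
    by_cases hadj : G.Adj x y
    · simp only [Finset.mem_union, Finset.mem_sdiff, mem_cutδ G _ hadj, Finset.mem_symmDiff]
      tauto
    · have h1 : ∀ W' : Finset V, s(x,y) ∉ cutδ G W' := fun W' hm =>
        hadj (by simpa using cutδ_subset G W' hm)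
      simp [h1]

lemma key_bound (θ : Sym2 V → ℝ) (f : Sym2 V) (C D : Finset (Sym2 V)) (hfC : f ∈ C)
    (hcrit : ∑ e ∈ C.erase f, |θ e| ≤ |θ f|)
    (hbad : f ∈ D ↔ 0 ≤ θ f) :
    ∑ e ∈ (D \ C) ∪ (C \ D), θ e ≤ ∑ e ∈ D, θ e := by
  have hdisj : Disjoint (D \ C) (C \ D) := by
    simp [Finset.disjoint_left, Finset.mem_sdiff]
    tauto
  rw [Finset.sum_union hdisj]
  have hDC : ∑ e ∈ D \ C, θ e = ∑ e ∈ D, θ e - ∑ e ∈ D ∩ C, θ e := by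
    rw [← Finset.sdiff_inter_self_left D C]
    exact Finset.sum_sdiff_eq_sub (Finset.inter_subset_left)
  rw [hDC]
  have habs : ∀ (A B : Finset (Sym2 V)), Disjoint A B → A ⊆ C.erase f → B ⊆ C.erase f →
      ∑ e ∈ A, |θ e| + ∑ e ∈ B, |θ e| ≤ |θ f| := by
    intro A B hAB hA hB
    rw [← Finset.sum_union hAB]
    refine le_trans (Finset.sum_le_sum_of_subset_of_nonneg (Finset.union_subset hA hB)
      (fun _ _ _ => abs_nonneg _)) hcrit
  by_cases hfD : f ∈ D
  · -- θ f ≥ 0, f ∈ C ∩ D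
    have hθf : 0 ≤ θ f := hbad.mp hfD
    have hfCD : f ∈ D ∩ C := Finset.mem_inter.mpr ⟨hfD, hfC⟩
    have hsum : ∑ e ∈ D ∩ C, θ e = θ f + ∑ e ∈ (D ∩ C).erase f, θ e := by
      rw [← Finset.sum_erase_add _ _ hfCD]; ring
    rw [hsum]
    have h1 : ∑ e ∈ C \ D, θ e ≤ ∑ e ∈ C \ D, |θ e| :=
      Finset.sum_le_sum fun e _ => le_abs_self _
    have h2 : -∑ e ∈ (D ∩ C).erase f, |θ e| ≤ ∑ e ∈ (D ∩ C).erase f, θ e := by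
      rw [← Finset.sum_neg_distrib]
      exact Finset.sum_le_sum fun e _ => neg_abs_le _
    have h3 : ∑ e ∈ C \ D, |θ e| + ∑ e ∈ (D ∩ C).erase f, |θ e| ≤ |θ f| := by
      refine habs _ _ ?_ ?_ ?_
      · rw [Finset.disjoint_left]
        intro a ha hb
        exact (Finset.mem_sdiff.mp ha).2 (Finset.mem_inter.mp (Finset.mem_of_mem_erase hb)).1
      · intro e he
        rw [Finset.mem_sdiff] at he
        exact Finset.mem_erase.mpr ⟨fun h => he.2 (h ▸ hfD), he.1⟩
      · intro e he
        rw [Finset.mem_erase] at he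
        exact Finset.mem_erase.mpr ⟨he.1, (Finset.mem_inter.mp he.2).2⟩
    have habs_f : |θ f| = θ f := abs_of_nonneg hθf
    linarith
  · -- θ f < 0, f ∈ C \ D
    have hθf : θ f < 0 := by
      by_contra h; exact hfD (hbad.mpr (not_lt.mp h))
    have hfCD : f ∈ C \ D := Finset.mem_sdiff.mpr ⟨hfC, hfD⟩
    have hsum : ∑ e ∈ C \ D, θ e = θ f + ∑ e ∈ (C \ D).erase f, θ e := by
      rw [← Finset.sum_erase_add _ _ hfCD]; ring
    rw [hsum]
    have h1 : ∑ e ∈ (C \ D).erase f, θ e ≤ ∑ e ∈ (C \ D).erase f, |θ e| :=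
      Finset.sum_le_sum fun e _ => le_abs_self _
    have h2 : -∑ e ∈ D ∩ C, |θ e| ≤ ∑ e ∈ D ∩ C, θ e := by
      rw [← Finset.sum_neg_distrib]
      exact Finset.sum_le_sum fun e _ => neg_abs_le _
    have h3 : ∑ e ∈ (C \ D).erase f, |θ e| + ∑ e ∈ D ∩ C, |θ e| ≤ |θ f| := by
      refine habs _ _ ?_ ?_ ?_
      · rw [Finset.disjoint_left]
        intro a ha hb
        exact (Finset.mem_sdiff.mp (Finset.mem_of_mem_erase ha)).2 (Finset.mem_inter.mp hb).1
      · intro e he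
        rw [Finset.mem_erase, Finset.mem_sdiff] at he
        exact Finset.mem_erase.mpr ⟨he.1, he.2.1⟩
      · intro e he
        rw [Finset.mem_inter] at he
        exact Finset.mem_erase.mpr ⟨fun h => hfD (h ▸ he.1), he.2⟩
    have habs_f : |θ f| = -θ f := abs_of_neg hθf
    linarith

/-- edge criterion for max-cut (in minimization form).  With
`β = 0` if `θ_f ≥ 0` and `β = 1` if `θ_f < 0`, there is an optimal cut `x*` with `x*_f = β`. -/
theorem stmt_5 (G : SimpleGraph V) [DecidableRel G.Adj] (θ : Sym2 V → ℝ)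
    (f : Sym2 V) (hf : f ∈ G.edgeFinset)
    (U : Finset V) (hUconn : (G.induce (U : Set V)).Connected)
    (hfδ : f ∈ cutδ G U)
    (hcrit : ∑ e ∈ (cutδ G U).erase f, |θ e| ≤ |θ f|) :
    ∃ M, IsCut G M ∧
      (∀ N, IsCut G N → ∑ e ∈ M, θ e ≤ ∑ e ∈ N, θ e) ∧
      (0 ≤ θ f → f ∉ M) ∧ (θ f < 0 → f ∈ M) := by
  classical
  obtain ⟨D, hDS, hDmin⟩ := Finset.exists_min_image
    ((G.edgeFinset.powerset).filter (fun M => IsCut G M)) (fun M => ∑ e ∈ M, θ e)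
    ⟨∅, by
      simp only [Finset.mem_filter, Finset.mem_powerset]
      exact ⟨Finset.empty_subset _, Finset.empty_subset _, ∅, by intro x y h; simp⟩⟩
  rw [Finset.mem_filter] at hDS
  have hDcut := hDS.2
  have hDopt : ∀ N, IsCut G N → ∑ e ∈ D, θ e ≤ ∑ e ∈ N, θ e := fun N hN =>
    hDmin N (Finset.mem_filter.mpr ⟨Finset.mem_powerset.mpr hN.1, hN⟩)
  by_cases hgood : f ∈ D ↔ θ f < 0
  · exact ⟨D, hDcut, hDopt, fun h hfD => absurd (hgood.mp hfD) (not_lt.mpr h), hgood.mpr⟩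
  · obtain ⟨W, rfl⟩ := hDcut.eq_cutδ
    have hbad : f ∈ cutδ G W ↔ 0 ≤ θ f := by
      rcases lt_or_ge (θ f) 0 with h | h
      · constructor
        · intro hm; exact absurd (Iff.intro (fun _ => h) (fun _ => hm)) hgood
        · intro hle; exact absurd h (not_lt.mpr hle)
      · constructor
        · intro _; exact h
        · intro _
          by_contra hm
          exact hgood ⟨fun hh => absurd hh hm, fun hh => absurd h (not_le.mpr hh)⟩
    have hEq : cutδ G (symmDiff W U) = (cutδ G W \ cutδ G U) ∪ (cutδ G U \ cutδ G W) :=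
      cutδ_symmDiff G W U
    have hsum : ∑ e ∈ cutδ G (symmDiff W U), θ e ≤ ∑ e ∈ cutδ G W, θ e := by
      rw [hEq]; exact key_bound θ f _ _ hfδ hcrit hbad
    have hfD' : f ∈ cutδ G (symmDiff W U) ↔ f ∉ cutδ G W := by
      rw [hEq, Finset.mem_union, Finset.mem_sdiff, Finset.mem_sdiff]
      constructor
      · rintro (⟨_, hc⟩ | ⟨_, hd⟩)
        · exact absurd hfδ hc
        · exact hd
      · intro hd; exact Or.inr ⟨hfδ, hd⟩
    refine ⟨cutδ G (symmDiff W U), isCut_cutδ G _, fun N hN => le_trans hsum (hDopt N hN), ?_, ?_⟩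
    · intro hθ hm
      exact (hfD'.mp hm) (hbad.mpr hθ)
    · intro hθ
      exact hfD'.mpr (fun hm => absurd (hbad.mp hm) (not_le.mpr hθ))
end

section
/- Let u, v ∈ V with f = uv ∈ E and θ_{uv} ≥ 0. If θ_{uv} ≥ Σ_{e ∈ δ({u,v}) ∩ E⁺} θ_e, then there exists an optimal solution x* of the multicut problem min_{x ∈ MC(G)} ⟨θ, x⟩ with x*_{uv} = 0. -/
variable {V : Type} [Fintype V] [DecidableEq V]

/-- single-edge specialization of the multicut subgraph criterion. -/
theorem stmt_10 (G : SimpleGraph V) [DecidableRel G.Adj] (θ : Sym2 V → ℝ)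
    (u v : V) (huv : G.Adj u v) (hθuv : 0 ≤ θ (s(u, v)))
    (hcrit : ∑ e ∈ (cutδ G {u, v}).filter (fun e => 0 ≤ θ e), θ e ≤ θ (s(u, v))) :
    ∃ M, IsMulticut G M ∧
      (∀ N, IsMulticut G N → ∑ e ∈ M, θ e ≤ ∑ e ∈ N, θ e) ∧ s(u, v) ∉ M := by
  classical
  -- there exists an optimal multicut N
  have hempty : IsMulticut G (∅ : Finset (Sym2 V)) :=
    ⟨Finset.empty_subset _, fun _ => u, fun x y _ => by simp⟩
  obtain ⟨N, hNmem, hNopt⟩ :=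
    Finset.exists_min_image
      ((Finset.univ : Finset (Finset (Sym2 V))).filter fun M => IsMulticut G M)
      (fun M => ∑ e ∈ M, θ e) ⟨∅, by simp [hempty]⟩
  have hN : IsMulticut G N := (Finset.mem_filter.mp hNmem).2
  have hNopt' : ∀ N', IsMulticut G N' → ∑ e ∈ N, θ e ≤ ∑ e ∈ N', θ e := fun N' h =>
    hNopt N' (Finset.mem_filter.mpr ⟨Finset.mem_univ _, h⟩)
  by_cases huvN : s(u, v) ∈ N
  swap
  · exact ⟨N, hN, hNopt', huvN⟩
  obtain ⟨hNsub, f, hf⟩ := hN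
  -- construct the modified partition g : merge u and v into their own class
  set L : V ≃ Fin (Fintype.card V) := Fintype.equivFin V with hL
  set T : V → Finset V := fun x => Finset.univ.filter fun y => y ≠ u ∧ y ≠ v ∧ f y = f x
    with hT
  have hTne : ∀ x, x ≠ u → x ≠ v → ((T x).image L).Nonempty := fun x hxu hxv =>
    ⟨L x, Finset.mem_image_of_mem _ (by simp [hT, hxu, hxv])⟩
  set g : V → V := fun x =>
    if h : x = u ∨ x = v then u
    else L.symm (((T x).image L).min' (hTne x (fun hx => h (Or.inl hx)) (fun hx => h (Or.inr hx))))
    with hg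
  have hgu : g u = u := by simp [hg]
  have hgv : g v = u := by simp [hg]
  have hgmem : ∀ x, x ≠ u → x ≠ v → g x ∈ T x := by
    intro x hxu hxv
    have hx : ¬ (x = u ∨ x = v) := by tauto
    simp only [hg, dif_neg hx]
    have hmin := Finset.min'_mem ((T x).image L)
      (hTne x (fun h => hx (Or.inl h)) (fun h => hx (Or.inr h)))
    obtain ⟨y, hy, hy2⟩ := Finset.mem_image.mp hmin
    rw [← hy2, Equiv.symm_apply_apply]; exact hy
  have hgx_ne_u : ∀ x, x ≠ u → x ≠ v → g x ≠ u := by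
    intro x h1 h2
    have := hgmem x h1 h2
    simp only [hT, Finset.mem_filter] at this
    exact this.2.1
  have hgf : ∀ x, x ≠ u → x ≠ v → f (g x) = f x := by
    intro x h1 h2
    have := hgmem x h1 h2
    simp only [hT, Finset.mem_filter] at this
    exact this.2.2.2
  have hgeq : ∀ x y, x ≠ u → x ≠ v → y ≠ u → y ≠ v → (g x = g y ↔ f x = f y) := by
    intro x y hxu hxv hyu hyv
    constructor
    · intro h
      rw [← hgf x hxu hxv, ← hgf y hyu hyv, h]
    · intro h
      have hx : ¬ (x = u ∨ x = v) := by tauto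
      have hy : ¬ (y = u ∨ y = v) := by tauto
      have hTxy : (T x).image L = (T y).image L := by
        have : T x = T y := by simp only [hT]; ext z; simp [h]
        rw [this]
      simp only [hg, dif_neg hx, dif_neg hy, hTxy]
  -- the new multicut
  set M : Finset (Sym2 V) := G.edgeFinset.filter (fun e => ¬ (e.map g).IsDiag) with hM
  have hMchar : ∀ x y, s(x, y) ∈ M ↔ (G.Adj x y ∧ g x ≠ g y) := by
    intro x y
    simp [hM, Sym2.map_pair_eq, Sym2.mk_isDiag_iff]
  have hNchar : ∀ x y, s(x, y) ∈ N ↔ (G.Adj x y ∧ f x ≠ f y) := by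
    intro x y
    constructor
    · intro h
      have he := hNsub h
      rw [SimpleGraph.mem_edgeFinset, SimpleGraph.mem_edgeSet] at he
      exact ⟨he, (hf x y he).mp h⟩
    · rintro ⟨ha, hne⟩; exact (hf x y ha).mpr hne
  have hMmc : IsMulticut G M :=
    ⟨Finset.filter_subset _ _, g, fun x y h => by rw [hMchar]; tauto⟩
  have huvM : s(u, v) ∉ M := by
    rw [hMchar]
    rintro ⟨-, hne⟩
    exact hne (hgu.trans hgv.symm)
  -- key: an edge of N touching {u,v}, other than uv itself, is still cut by g
  have hkey : ∀ x y, G.Adj x y → (u = x ∨ u = y ∨ v = x ∨ v = y) →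
      s(x, y) ≠ s(u, v) → g x ≠ g y := by
    intro x y hadj hmem hne
    have hxy : x ≠ y := hadj.ne
    rcases hmem with h | h | h | h
    · subst h
      have hyv : y ≠ v := fun hyv => hne (by rw [hyv])
      rw [hgu]
      exact (hgx_ne_u y (Ne.symm hxy) hyv).symm
    · subst h
      have hxv : x ≠ v := fun hxv => hne (by rw [hxv, Sym2.eq_swap])
      rw [hgu]
      exact hgx_ne_u x hxy hxv
    · subst h
      have hyu : y ≠ u := fun hyu => hne (by rw [hyu, Sym2.eq_swap])
      rw [hgv]
      exact (hgx_ne_u y hyu (Ne.symm hxy)).symm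
    · subst h
      have hxu : x ≠ u := fun hxu => hne (by rw [hxu])
      rw [hgv]
      exact hgx_ne_u x hxu hxy
  -- the "both endpoints outside {u,v}" predicate
  set pOut : Sym2 V → Prop := fun e => u ∉ e ∧ v ∉ e with hpOut
  -- edges untouched by the merge coincide
  have hA : M.filter pOut = N.filter pOut := by
    ext e
    induction e using Sym2.ind with
    | _ x y =>
      simp only [Finset.mem_filter, hMchar, hNchar, hpOut, Sym2.mem_iff, not_or]
      constructor
      · rintro ⟨⟨ha, hgne⟩, ⟨hu1, hu2⟩, hv1, hv2⟩
        refine ⟨⟨ha, ?_⟩, ⟨hu1, hu2⟩, hv1, hv2⟩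
        intro hfe
        exact hgne ((hgeq x y (Ne.symm hu1) (Ne.symm hv1) (Ne.symm hu2) (Ne.symm hv2)).mpr hfe)
      · rintro ⟨⟨ha, hfne⟩, ⟨hu1, hu2⟩, hv1, hv2⟩
        refine ⟨⟨ha, ?_⟩, ⟨hu1, hu2⟩, hv1, hv2⟩
        intro hge
        exact hfne ((hgeq x y (Ne.symm hu1) (Ne.symm hv1) (Ne.symm hu2) (Ne.symm hv2)).mp hge)
  -- edges of the new cut touching {u,v} that were already in N
  have hC : M.filter (fun e => ¬ pOut e) ∩ N = (N.filter fun e => ¬ pOut e).erase s(u, v) := by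
    ext e
    constructor
    · intro h
      rw [Finset.mem_inter, Finset.mem_filter] at h
      rw [Finset.mem_erase, Finset.mem_filter]
      refine ⟨?_, h.2, h.1.2⟩
      rintro rfl
      exact huvM h.1.1
    · intro h
      rw [Finset.mem_erase, Finset.mem_filter] at h
      rw [Finset.mem_inter, Finset.mem_filter]
      refine ⟨⟨?_, h.2.2⟩, h.2.1⟩
      obtain ⟨hne, heN, hnp⟩ := h
      induction e using Sym2.ind with
      | _ x y =>
        rw [hNchar] at heN
        rw [hMchar]
        refine ⟨heN.1, hkey x y heN.1 ?_ hne⟩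
        simp only [hpOut, Sym2.mem_iff, not_and_or, not_not] at hnp
        tauto
  -- edges of the new cut touching {u,v} lie in δ({u,v})
  have hD : M.filter (fun e => ¬ pOut e) ⊆ cutδ G {u, v} := by
    intro e he
    rw [Finset.mem_filter] at he
    obtain ⟨heM, hnp⟩ := he
    induction e using Sym2.ind with
    | _ x y =>
      rw [hMchar] at heM
      obtain ⟨hadj, hgne⟩ := heM
      have hne : s(x, y) ≠ s(u, v) := by
        rintro h; exact huvM (h ▸ (hMchar x y).mpr ⟨hadj, hgne⟩)
      simp only [hpOut, Sym2.mem_iff, not_and_or, not_not] at hnp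
      rw [cutδ, _root_.btw, Finset.mem_filter]
      have hxy := hadj.ne
      constructor
      · rw [SimpleGraph.mem_edgeFinset, SimpleGraph.mem_edgeSet]; exact hadj
      · rcases hnp with h | h
        · rcases h with h | h
          · -- u = x
            subst h
            have hyv : y ≠ v := fun hyv => hne (by rw [hyv])
            exact ⟨u, by simp, y, by simp [Ne.symm hxy, hyv], rfl⟩
          · subst h
            have hxv : x ≠ v := fun hxv => hne (by rw [hxv, Sym2.eq_swap])
            exact ⟨u, by simp, x, by simp [hxy, hxv], Sym2.eq_swap⟩
        · rcases h with h | h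
          · subst h
            have hyu : y ≠ u := fun hyu => hne (by rw [hyu, Sym2.eq_swap])
            exact ⟨v, by simp, y, by simp [hyu, Ne.symm hxy], rfl⟩
          · subst h
            have hxu : x ≠ u := fun hxu => hne (by rw [hxu])
            exact ⟨v, by simp, x, by simp [hxu, hxy], Sym2.eq_swap⟩
  -- sum comparison
  have hsum2 :
      ∑ e ∈ (M.filter fun e => ¬ pOut e) \ N, θ e ≤ θ (s(u, v)) := by
    set S := (M.filter fun e => ¬ pOut e) \ N with hS
    have h1 : ∑ e ∈ S, θ e ≤ ∑ e ∈ S.filter (fun e => 0 ≤ θ e), θ e := by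
      have := Finset.sum_filter_add_sum_filter_not S (fun e => 0 ≤ θ e) θ
      have h2 : ∑ e ∈ S.filter (fun e => ¬ 0 ≤ θ e), θ e ≤ 0 :=
        Finset.sum_nonpos fun e he => le_of_not_ge (Finset.mem_filter.mp he).2
      linarith
    have h3 : S.filter (fun e => 0 ≤ θ e) ⊆ (cutδ G {u, v}).filter (fun e => 0 ≤ θ e) := by
      intro e he
      rw [Finset.mem_filter] at he ⊢
      exact ⟨hD (Finset.sdiff_subset he.1), he.2⟩
    have h4 : ∑ e ∈ S.filter (fun e => 0 ≤ θ e), θ e ≤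
        ∑ e ∈ (cutδ G {u, v}).filter (fun e => 0 ≤ θ e), θ e :=
      Finset.sum_le_sum_of_subset_of_nonneg h3 fun e he _ => (Finset.mem_filter.mp he).2
    linarith
  have huvN2 : s(u, v) ∈ N.filter fun e => ¬ pOut e := by
    rw [Finset.mem_filter]
    refine ⟨huvN, ?_⟩
    simp [hpOut]
  have hfinal : ∑ e ∈ M, θ e ≤ ∑ e ∈ N, θ e := by
    have hMsplit := Finset.sum_filter_add_sum_filter_not M pOut θ
    have hNsplit := Finset.sum_filter_add_sum_filter_not N pOut θ
    have hM2split := Finset.sum_inter_add_sum_sdiff (M.filter fun e => ¬ pOut e) N θ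
    have hN2split := Finset.add_sum_erase _ θ huvN2
    rw [hC] at hM2split
    rw [hA] at hMsplit
    linarith
  exact ⟨M, hMmc, fun N' h => le_trans hfinal (hNopt' N' h), huvM⟩
end

section
/- Let u, v, w ∈ V with uv, uw, vw ∈ E. Suppose the minimum weight of a multicut of the triangle subgraph H = ({u,v,w}, {uv, uw, vw}) with respect to θ restricted to its edges equals 0, and that min{θ_{uv} + θ_{uw}, θ_{uv} + θ_{vw}, θ_{uw} + θ_{vw}} ≥ Σ_{e ∈ δ({u,v,w}) ∩ E⁺} θ_e. Then there exists an optimal solution x* of the multicut problem min_{x ∈ MC(G)} ⟨θ, x⟩ with x*_{uv} = 0. -/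
variable {V : Type} [Fintype V] [DecidableEq V]

/-- `M` is (the edge set of) a multicut of the subgraph with edge set `EH`. -/
def IsMulticutOn (EH : Finset (Sym2 V)) (M : Finset (Sym2 V)) : Prop :=
  M ⊆ EH ∧ ∃ f : V → V, ∀ x y, s(x, y) ∈ EH → (s(x, y) ∈ M ↔ f x ≠ f y)

lemma tri_pair_multicut (a b c : V) (hab : a ≠ b) (hac : a ≠ c) (hbc : b ≠ c) :
    IsMulticutOn {s(a,b), s(a,c), s(b,c)} {s(a,b), s(a,c)} := by
  refine ⟨by intro e he; simp only [Finset.mem_insert, Finset.mem_singleton] at he ⊢; tauto,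
    fun x => if x = a then b else a, ?_⟩
  intro x y hxy
  simp only [Finset.mem_insert, Finset.mem_singleton, Sym2.eq_iff] at hxy ⊢
  rcases hxy with (⟨hx,hy⟩|⟨hx,hy⟩)|(⟨hx,hy⟩|⟨hx,hy⟩)|(⟨hx,hy⟩|⟨hx,hy⟩) <;> subst hx <;> subst hy <;>
    simp [hab, hac, hbc, hab.symm, hac.symm, hbc.symm]

lemma min_le_total_tri (a b c : ℝ) (h1 : 0 ≤ a+b) (h2 : 0 ≤ a+c) (h3 : 0 ≤ b+c) :
    min (min (a+b) (a+c)) (b+c) ≤ a+(b+c) := by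
  rcases le_or_gt 0 c with h|h
  · calc min (min (a+b) (a+c)) (b+c) ≤ min (a+b) (a+c) := min_le_left _ _
      _ ≤ a+b := min_le_left _ _
      _ ≤ a+(b+c) := by linarith
  · have : min (min (a+b) (a+c)) (b+c) ≤ b+c := min_le_right _ _
    linarith


set_option maxHeartbeats 4000000 in
/-- triangle specialization of the multicut subgraph criterion. -/
theorem stmt_11 (G : SimpleGraph V) [DecidableRel G.Adj] (θ : Sym2 V → ℝ)
    (u v w : V) (huv : G.Adj u v) (huw : G.Adj u w) (hvw : G.Adj v w)
    (htriv_lb : ∀ M, IsMulticutOn {s(u, v), s(u, w), s(v, w)} M → 0 ≤ ∑ e ∈ M, θ e)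
    (htriv_eq : ∃ M, IsMulticutOn {s(u, v), s(u, w), s(v, w)} M ∧ ∑ e ∈ M, θ e = 0)
    (hcrit : ∑ e ∈ (cutδ G {u, v, w}).filter (fun e => 0 ≤ θ e), θ e
      ≤ min (min (θ (s(u, v)) + θ (s(u, w))) (θ (s(u, v)) + θ (s(v, w))))
          (θ (s(u, w)) + θ (s(v, w)))) :
    ∃ M, IsMulticut G M ∧
      (∀ N, IsMulticut G N → ∑ e ∈ M, θ e ≤ ∑ e ∈ N, θ e) ∧ s(u, v) ∉ M := by
  classical
  have hne_uv : u ≠ v := huv.ne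
  have hne_uw : u ≠ w := huw.ne
  have hne_vw : v ≠ w := hvw.ne
  -- distinctness of triangle edges
  have d1 : s(u,v) ≠ s(u,w) := by simp [Sym2.eq_iff, hne_vw, hne_uw, Ne.symm hne_uv]
  have d2 : s(u,v) ≠ s(v,w) := by simp [Sym2.eq_iff, hne_uv, hne_uw, Ne.symm hne_vw]
  have d3 : s(u,w) ≠ s(v,w) := by simp [Sym2.eq_iff, hne_uv, hne_uw, hne_vw]
  -- pairwise sums nonneg
  have hab : 0 ≤ θ s(u,v) + θ s(u,w) := by
    have := htriv_lb _ (tri_pair_multicut u v w hne_uv hne_uw hne_vw)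
    rwa [Finset.sum_pair d1] at this
  have hac : 0 ≤ θ s(u,v) + θ s(v,w) := by
    have h := htriv_lb {s(v,u), s(v,w)} ?_
    · rw [Finset.sum_pair (by simpa [Sym2.eq_swap] using d2)] at h
      simpa [Sym2.eq_swap] using h
    · have h2 := tri_pair_multicut v u w (Ne.symm hne_uv) hne_vw hne_uw
      have hset : ({s(v,u), s(v,w), s(u,w)} : Finset (Sym2 V)) = {s(u,v), s(u,w), s(v,w)} := by
        rw [Sym2.eq_swap (a := v) (b := u)]
        ext e; simp; tauto
      rwa [hset] at h2
  have hbc : 0 ≤ θ s(u,w) + θ s(v,w) := by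
    have h := htriv_lb {s(w,u), s(w,v)} ?_
    · rw [Finset.sum_pair (by simp [Sym2.eq_iff, hne_uv, Ne.symm hne_uw, Ne.symm hne_vw])] at h
      simpa [Sym2.eq_swap] using h
    · have h2 := tri_pair_multicut w u v (Ne.symm hne_uw) (Ne.symm hne_vw) hne_uv
      have hset : ({s(w,u), s(w,v), s(u,v)} : Finset (Sym2 V)) = {s(u,v), s(u,w), s(v,w)} := by
        rw [Sym2.eq_swap (a := w) (b := u), Sym2.eq_swap (a := w) (b := v)]
        ext e; simp; tauto
      rwa [hset] at h2
  -- an optimal multicut exists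
  have hSne : (Finset.univ.filter (fun M : Finset (Sym2 V) => IsMulticut G M)).Nonempty := by
    refine ⟨∅, ?_⟩
    simp only [Finset.mem_filter, Finset.mem_univ, true_and]
    exact ⟨Finset.empty_subset _, fun _ => u, fun x y _ => by simp⟩
  obtain ⟨M, hMmem, hMmin⟩ := Finset.exists_min_image _ (fun M => ∑ e ∈ M, θ e) hSne
  have hM : IsMulticut G M := (Finset.mem_filter.mp hMmem).2
  obtain ⟨hMsub, f, hf⟩ := hM
  have hMmin' : ∀ N, IsMulticut G N → ∑ e ∈ M, θ e ≤ ∑ e ∈ N, θ e := fun N hN =>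
    hMmin N (Finset.mem_filter.mpr ⟨Finset.mem_univ _, hN⟩)
  by_cases hfu : f u = f v
  · exact ⟨M, ⟨hMsub, f, hf⟩, hMmin', by simp [hf u v huv, hfu]⟩
  -- construction of the merged multicut
  set T : Finset V := {u, v, w} with hT
  have hTcard : 2 ≤ T.card := by
    rw [hT]
    have : ({u, v} : Finset V) ⊆ {u, v, w} := by intro x; simp; tauto
    calc 2 = ({u, v} : Finset V).card := (Finset.card_pair hne_uv).symm
      _ ≤ _ := Finset.card_le_card this
  set T3 : Finset (Sym2 V) := {s(u,v), s(u,w), s(v,w)} with hT3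
  -- membership in T of u v w
  have huT : u ∈ T := by simp [hT]
  have hvT : v ∈ T := by simp [hT]
  have hwT : w ∈ T := by simp [hT]
  -- edges inside T are triangle edges
  have in_T3 : ∀ x y : V, x ∈ T → y ∈ T → x ≠ y → s(x,y) ∈ T3 := by
    intro x y hx hy hxy
    simp only [hT, Finset.mem_insert, Finset.mem_singleton] at hx hy
    simp only [hT3, Finset.mem_insert, Finset.mem_singleton, Sym2.eq_iff]
    rcases hx with rfl|rfl|rfl <;> rcases hy with rfl|rfl|rfl <;> tauto
  -- triangle edges have both endpoints in T
  have T3_in : ∀ x y : V, s(x,y) ∈ T3 → x ∈ T ∧ y ∈ T := by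
    intro x y hxy
    simp only [hT3, Finset.mem_insert, Finset.mem_singleton, Sym2.eq_iff] at hxy
    simp only [hT, Finset.mem_insert, Finset.mem_singleton]
    rcases hxy with (⟨hx,hy⟩|⟨hx,hy⟩)|(⟨hx,hy⟩|⟨hx,hy⟩)|(⟨hx,hy⟩|⟨hx,hy⟩) <;>
      subst hx <;> subst hy <;> tauto
  obtain ⟨x₀, _, hx₀⟩ : ∃ x₀ ∈ Finset.univ, x₀ ∉ (Finset.univ \ T).image f := by
    apply Finset.exists_of_ssubset
    rw [Finset.ssubset_univ_iff]
    intro hEq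
    have h1 : ((Finset.univ \ T).image f).card ≤ (Finset.univ \ T).card :=
      Finset.card_image_le
    rw [hEq, Finset.card_sdiff_of_subset (Finset.subset_univ _)] at h1
    have h2 : 0 < T.card := by omega
    have h3 : T.card ≤ Finset.univ.card := Finset.card_le_card (Finset.subset_univ _)
    omega
  have hx₀' : ∀ y, y ∉ T → f y ≠ x₀ := by
    intro y hy hEq
    exact hx₀ (Finset.mem_image.mpr ⟨y, by simp [hy], hEq⟩)
  set h : V → V := fun x => if x ∈ T then x₀ else f x with hh
  set P : Sym2 V → Prop :=
    Sym2.lift ⟨fun x y => h x = h y, fun a b => propext ⟨Eq.symm, Eq.symm⟩⟩ with hP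
  have hPmk : ∀ x y : V, P s(x,y) ↔ h x = h y := fun x y => Iff.rfl
  set N : Finset (Sym2 V) := G.edgeFinset.filter (fun e => ¬ P e) with hNdef
  have hNmem : ∀ x y : V, s(x,y) ∈ N ↔ G.Adj x y ∧ h x ≠ h y := by
    intro x y
    simp [hNdef, SimpleGraph.mem_edgeFinset, hPmk]
  have hN : IsMulticut G N :=
    ⟨Finset.filter_subset _ _, h, fun x y hxy => by rw [hNmem]; simp [hxy]⟩
  have hNuv : s(u,v) ∉ N := by
    rw [hNmem]
    have : h u = h v := by simp [hh, hT]
    simp [this]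
  set B : Finset (Sym2 V) := cutδ G T with hB
  have hBmem : ∀ e, e ∈ B ↔ e ∈ G.edgeFinset ∧ ∃ x ∈ T, ∃ y ∈ Tᶜ, e = s(x,y) := by
    intro e; simp [hB, cutδ, _root_.btw]
  -- boundary edges are in N
  have hBN : ∀ e ∈ B, e ∈ N := by
    intro e he
    rw [hBmem] at he
    obtain ⟨hef, x, hx, y, hy, rfl⟩ := he
    rw [Finset.mem_compl] at hy
    rw [hNmem]
    refine ⟨by rwa [SimpleGraph.mem_edgeFinset] at hef, ?_⟩
    simp only [hh]
    rw [if_pos hx, if_neg hy]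
    exact fun hEq => hx₀' y hy hEq.symm
  -- boundary edges are not triangle edges
  have hBT3 : ∀ e ∈ B, e ∉ T3 := by
    intro e he heT3
    rw [hBmem] at he
    obtain ⟨hef, x, hx, y, hy, rfl⟩ := he
    rw [Finset.mem_compl] at hy
    exact hy (T3_in x y heT3).2
  -- boundary via endpoints
  have mem_B : ∀ x y : V, G.Adj x y → x ∈ T → y ∉ T → s(x,y) ∈ B := by
    intro x y hxy hx hy
    rw [hBmem]
    exact ⟨SimpleGraph.mem_edgeFinset.mpr hxy, x, hx, y, Finset.mem_compl.mpr hy, rfl⟩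
  -- key decomposition: N = (M \ T3) ∪ B
  have hNkey : N = (M \ T3) ∪ B := by
    ext e
    induction e using Sym2.ind with
    | _ x y =>
    simp only [Finset.mem_union, Finset.mem_sdiff]
    constructor
    · intro heN
      rw [hNmem] at heN
      obtain ⟨hadj, hcut⟩ := heN
      by_cases hx : x ∈ T <;> by_cases hy : y ∈ T
      · exfalso; apply hcut; simp [hh, hx, hy]
      · exact Or.inr (mem_B x y hadj hx hy)
      · refine Or.inr ?_
        rw [Sym2.eq_swap]; exact mem_B y x hadj.symm hy hx
      · refine Or.inl ⟨(hf x y hadj).mpr ?_, fun hT3' => hx (T3_in x y hT3').1⟩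
        simpa [hh, hx, hy] using hcut
    · rintro (⟨heM, heT3⟩ | heB)
      · have hadj : G.Adj x y := by
          have := hMsub heM; rwa [SimpleGraph.mem_edgeFinset] at this
        by_cases hx : x ∈ T <;> by_cases hy : y ∈ T
        · exact absurd (in_T3 x y hx hy hadj.ne) heT3
        · exact hBN _ (mem_B x y hadj hx hy)
        · apply hBN
          rw [Sym2.eq_swap]; exact mem_B y x hadj.symm hy hx
        · rw [hNmem]
          refine ⟨hadj, ?_⟩
          have := (hf x y hadj).mp heM
          simpa [hh, hx, hy] using this
      · exact hBN _ heB
  -- sum over N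
  have hsumN : ∑ e ∈ N, θ e = ∑ e ∈ M \ T3, θ e + ∑ e ∈ B \ M, θ e := by
    rw [hNkey, ← Finset.union_sdiff_self_eq_union,
      Finset.sum_union Finset.disjoint_sdiff]
    congr 1
    congr 1
    ext e
    simp only [Finset.mem_sdiff]
    constructor
    · rintro ⟨heB, hnot⟩
      exact ⟨heB, fun heM => hnot ⟨heM, hBT3 e heB⟩⟩
    · rintro ⟨heB, hnot⟩
      exact ⟨heB, fun hmem => hnot hmem.1⟩
  -- sum over M
  have hsumM : ∑ e ∈ M, θ e = ∑ e ∈ M ∩ T3, θ e + ∑ e ∈ M \ T3, θ e := by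
    rw [Finset.sum_inter_add_sum_sdiff]
  -- bound the boundary sum
  have hBbound : ∑ e ∈ B \ M, θ e ≤ ∑ e ∈ B.filter (fun e => 0 ≤ θ e), θ e := by
    have h1 : ∑ e ∈ B \ M, θ e ≤ ∑ e ∈ (B \ M).filter (fun e => 0 ≤ θ e), θ e := by
      rw [← Finset.sum_filter_add_sum_filter_not (B \ M) (fun e => 0 ≤ θ e)]
      have : ∑ e ∈ (B \ M).filter (fun e => ¬ 0 ≤ θ e), θ e ≤ 0 := by
        apply Finset.sum_nonpos
        intro e he
        have := (Finset.mem_filter.mp he).2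
        linarith [lt_of_not_ge this]
      linarith
    refine h1.trans (Finset.sum_le_sum_of_subset_of_nonneg ?_ ?_)
    · exact Finset.filter_subset_filter _ (Finset.sdiff_subset)
    · intro e he _
      exact (Finset.mem_filter.mp he).2
  -- s(u,v) ∈ M
  have huvM : s(u,v) ∈ M := (hf u v huv).mpr hfu
  -- lower bound on the triangle part of M
  have hT3bound : min (min (θ s(u,v) + θ s(u,w)) (θ s(u,v) + θ s(v,w)))
      (θ s(u,w) + θ s(v,w)) ≤ ∑ e ∈ M ∩ T3, θ e := by
    by_cases h2 : s(u,w) ∈ M <;> by_cases h3 : s(v,w) ∈ M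
    · -- all three
      have : M ∩ T3 = T3 := by
        apply Finset.inter_eq_right.mpr
        intro e he
        simp only [hT3, Finset.mem_insert, Finset.mem_singleton] at he
        rcases he with rfl|rfl|rfl <;> assumption
      rw [this, hT3, Finset.sum_insert (by simp [d1, d2]),
        Finset.sum_pair d3]
      exact min_le_total_tri _ _ _ hab hac hbc
    · have : M ∩ T3 = {s(u,v), s(u,w)} := by
        ext e
        simp only [Finset.mem_inter, hT3, Finset.mem_insert, Finset.mem_singleton]
        constructor
        · rintro ⟨heM, rfl|rfl|rfl⟩
          · tauto
          · tauto
          · exact absurd heM h3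
        · rintro (rfl|rfl) <;> tauto
      rw [this, Finset.sum_pair d1]
      exact le_trans (min_le_left _ _) (min_le_left _ _)
    · have : M ∩ T3 = {s(u,v), s(v,w)} := by
        ext e
        simp only [Finset.mem_inter, hT3, Finset.mem_insert, Finset.mem_singleton]
        constructor
        · rintro ⟨heM, rfl|rfl|rfl⟩
          · tauto
          · exact absurd heM h2
          · tauto
        · rintro (rfl|rfl) <;> tauto
      rw [this, Finset.sum_pair d2]
      exact le_trans (min_le_left _ _) (min_le_right _ _)
    · exfalso
      have h2' : f u = f w := by
        by_contra hne; exact h2 ((hf u w huw).mpr hne)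
      have h3' : f v = f w := by
        by_contra hne; exact h3 ((hf v w hvw).mpr hne)
      exact hfu (h2'.trans h3'.symm)
  -- N is at most as expensive as M
  have hle : ∑ e ∈ N, θ e ≤ ∑ e ∈ M, θ e := by
    rw [hsumN, hsumM]
    have := hBbound.trans (hcrit.trans hT3bound)
    linarith
  exact ⟨N, hN, fun N' hN' => hle.trans (hMmin' N' hN'), hNuv⟩
end

section
/- Let H = (V_H, E_H) be a connected subgraph of G and let uv ∈ E_H. Suppose that for every U ⊂ V_H with u ∈ U and v ∉ U it holds that Σ_{e ∈ δ(U, V_H \ U)} θ_e ≥ min{ Σ_{e ∈ δ(U, V \ V_H)} |θ_e|, Σ_{e ∈ δ(V_H \ U, V \ V_H)} |θ_e| }. Then there exists an optimal solution x* of the max-cut problem min_{x ∈ CUT(G)} ⟨θ, x⟩ with x*_{uv} = 0. -/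
variable {V : Type} [Fintype V] [DecidableEq V]

/-- The subgraph `(VH, EH)` is connected. -/
def ConnOn (VH : Finset V) (EH : Finset (Sym2 V)) : Prop :=
  VH.Nonempty ∧ ∀ a ∈ VH, ∀ b ∈ VH, Relation.ReflTransGen (fun x y => s(x, y) ∈ EH) a b

set_option linter.unusedSectionVars false
set_option linter.unusedVariables false

lemma pair_mem_iff {P Q : Finset V} {x y : V} :
    (∃ a ∈ P, ∃ b ∈ Q, s(x, y) = s(a, b)) ↔ (x ∈ P ∧ y ∈ Q) ∨ (y ∈ P ∧ x ∈ Q) := by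
  constructor
  · rintro ⟨a, ha, b, hb, hab⟩
    rw [Sym2.eq_iff] at hab
    rcases hab with ⟨rfl, rfl⟩ | ⟨rfl, rfl⟩
    · exact Or.inl ⟨ha, hb⟩
    · exact Or.inr ⟨ha, hb⟩
  · rintro (⟨hx, hy⟩ | ⟨hy, hx⟩)
    · exact ⟨x, hx, y, hy, rfl⟩
    · exact ⟨y, hy, x, hx, Sym2.eq_swap⟩

lemma mem_btw_pair (G : SimpleGraph V) [DecidableRel G.Adj] (P Q : Finset V) (x y : V) :
    s(x, y) ∈ btw G P Q ↔
      s(x, y) ∈ G.edgeFinset ∧ ((x ∈ P ∧ y ∈ Q) ∨ (y ∈ P ∧ x ∈ Q)) := by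
  simp only [_root_.btw, Finset.mem_filter, pair_mem_iff]

lemma btw_comm (G : SimpleGraph V) [DecidableRel G.Adj] (P Q : Finset V) :
    btw G P Q = btw G Q P := by
  ext e
  simp only [_root_.btw, Finset.mem_filter]
  constructor <;> rintro ⟨he, a, ha, b, hb, hab⟩ <;>
    exact ⟨he, b, hb, a, ha, hab.trans Sym2.eq_swap⟩

lemma mem_cut_iff (G : SimpleGraph V) [DecidableRel G.Adj] {A : Finset V} {x y : V}
    (h : G.Adj x y) : s(x, y) ∈ btw G A Aᶜ ↔ (x ∈ A ↔ y ∉ A) := by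
  have he : s(x, y) ∈ G.edgeFinset := SimpleGraph.mem_edgeFinset.mpr h
  rw [mem_btw_pair]
  simp only [he, true_and, Finset.mem_compl]
  tauto

lemma cut_compl (G : SimpleGraph V) [DecidableRel G.Adj] (A : Finset V) :
    btw G Aᶜ Aᶜᶜ = btw G A Aᶜ := by
  rw [compl_compl, btw_comm]

lemma isCut_btw (G : SimpleGraph V) [DecidableRel G.Adj] (A : Finset V) :
    IsCut G (btw G A Aᶜ) :=
  ⟨Finset.filter_subset _ _, ⟨A, fun _ _ h => mem_cut_iff G h⟩⟩

lemma IsCut.eq_btw {G : SimpleGraph V} [DecidableRel G.Adj] {N : Finset (Sym2 V)}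
    (h : IsCut G N) : ∃ A, N = btw G A Aᶜ := by
  obtain ⟨hsub, A, hA⟩ := h
  refine ⟨A, ?_⟩
  ext e
  induction e using Sym2.ind with
  | _ x y =>
    by_cases he : G.Adj x y
    · rw [hA x y he, mem_cut_iff G he]
    · constructor
      · intro hm
        exact absurd (hsub hm) (by simp [SimpleGraph.mem_edgeFinset, he])
      · intro hm
        exact absurd ((Finset.filter_subset _ _) hm)
          (by simp [SimpleGraph.mem_edgeFinset, he])

lemma sum_btw_eq (G : SimpleGraph V) [DecidableRel G.Adj] (P Q : Finset V)
    (g : Sym2 V → ℝ) :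
    ∑ e ∈ btw G P Q, g e = ∑ e ∈ G.edgeFinset, if e ∈ btw G P Q then g e else 0 := by
  have hs : btw G P Q ⊆ G.edgeFinset := Finset.filter_subset _ _
  rw [Finset.sum_ite_mem, Finset.inter_eq_right.mpr hs]

lemma key (G : SimpleGraph V) [DecidableRel G.Adj] (θ : Sym2 V → ℝ) (VH A : Finset V) :
    ((∑ e ∈ btw G (A ∪ VH) (A ∪ VH)ᶜ, θ e) + ∑ e ∈ btw G (A ∩ VH) (VH \ (A ∩ VH)), θ e)
    ≤ (∑ e ∈ btw G A Aᶜ, θ e) + ∑ e ∈ btw G (VH \ (A ∩ VH)) VHᶜ, |θ e| := by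
  rw [sum_btw_eq, sum_btw_eq, sum_btw_eq G A, sum_btw_eq,
    ← Finset.sum_add_distrib, ← Finset.sum_add_distrib]
  apply Finset.sum_le_sum
  intro e he
  induction e using Sym2.ind with
  | _ x y =>
    simp only [mem_btw_pair, he, true_and, Finset.mem_union, Finset.mem_compl,
      Finset.mem_inter, Finset.mem_sdiff]
    by_cases hxA : x ∈ A <;> by_cases hyA : y ∈ A <;>
      by_cases hxH : x ∈ VH <;> by_cases hyH : y ∈ VH <;>
      simp [hxA, hyA, hxH, hyH] <;>
      first
        | rfl
        | linarith [le_abs_self (θ s(x, y)), neg_abs_le (θ s(x, y)), abs_nonneg (θ s(x, y))]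

/-- max-cut subgraph criterion (Theorem: Max-Cut Subgraph Criterion). -/
theorem stmt_12 (G : SimpleGraph V) [DecidableRel G.Adj] (θ : Sym2 V → ℝ)
    (VH : Finset V) (EH : Finset (Sym2 V))
    (hEHsub : EH ⊆ G.edgeFinset)
    (hEHverts : ∀ e ∈ EH, ∀ x ∈ e, x ∈ VH)
    (hconn : ConnOn VH EH)
    (u v : V) (huv : s(u, v) ∈ EH)
    (hcrit : ∀ U : Finset V, U ⊂ VH → u ∈ U → v ∉ U →
      min (∑ e ∈ btw G U VHᶜ, |θ e|) (∑ e ∈ btw G (VH \ U) VHᶜ, |θ e|)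
        ≤ ∑ e ∈ btw G U (VH \ U), θ e) :
    ∃ M, IsCut G M ∧
      (∀ N, IsCut G N → ∑ e ∈ M, θ e ≤ ∑ e ∈ N, θ e) ∧ s(u, v) ∉ M := by
  classical
  have hadjuv : G.Adj u v := by
    have := hEHsub huv
    simpa [SimpleGraph.mem_edgeFinset] using this
  obtain ⟨U₀, -, hmin0⟩ := Finset.exists_min_image (Finset.univ : Finset (Finset V))
      (fun A => ∑ e ∈ btw G A Aᶜ, θ e) ⟨∅, Finset.mem_univ ∅⟩
  have hmin : ∀ B : Finset V,
      (∑ e ∈ btw G U₀ U₀ᶜ, θ e) ≤ ∑ e ∈ btw G B Bᶜ, θ e :=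
    fun B => hmin0 B (Finset.mem_univ B)
  by_cases hsplit : s(u, v) ∈ btw G U₀ U₀ᶜ
  · obtain ⟨U₁, hmin1, hu1, hv1⟩ : ∃ U₁ : Finset V,
        (∀ B : Finset V, (∑ e ∈ btw G U₁ U₁ᶜ, θ e) ≤ ∑ e ∈ btw G B Bᶜ, θ e)
          ∧ u ∈ U₁ ∧ v ∉ U₁ := by
      have h' := (mem_cut_iff G hadjuv).mp hsplit
      by_cases hu : u ∈ U₀
      · exact ⟨U₀, hmin, hu, h'.mp hu⟩
      · refine ⟨U₀ᶜ, ?_, Finset.mem_compl.mpr hu, ?_⟩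
        · intro B
          rw [cut_compl]
          exact hmin B
        · simp only [Finset.mem_compl, not_not]
          tauto
    set U : Finset V := U₁ ∩ VH with hU
    have huH : u ∈ VH := hEHverts _ huv u (by simp)
    have hvH : v ∈ VH := hEHverts _ huv v (by simp)
    have hvU : v ∉ U := fun hv => hv1 (Finset.mem_inter.mp hv).1
    have hUsub : U ⊂ VH := by
      refine ⟨Finset.inter_subset_right, fun hsub => hvU (hsub hvH)⟩
    have hc := hcrit U hUsub (Finset.mem_inter.mpr ⟨hu1, huH⟩) hvU
    have k1 := key G θ VH U₁
    have k2 := key G θ VH U₁ᶜ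
    have e1 : U₁ᶜ ∩ VH = VH \ U := by
      ext a; simp [hU]; tauto
    have e2 : VH \ (VH \ U) = U := by
      ext a; simp [hU]; tauto
    rw [e1, e2, cut_compl, btw_comm G (VH \ U) U] at k2
    have e3 : VH \ (U₁ ∩ VH) = VH \ U := by rw [hU]
    rw [e3] at k1
    rcases le_total (∑ e ∈ btw G U VHᶜ, |θ e|) (∑ e ∈ btw G (VH \ U) VHᶜ, |θ e|)
      with hle | hle
    · -- use U₁ᶜ ∪ VH
      have hm : (∑ e ∈ btw G U VHᶜ, |θ e|) ≤ ∑ e ∈ btw G U (VH \ U), θ e := by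
        rwa [min_eq_left hle] at hc
      refine ⟨btw G (U₁ᶜ ∪ VH) (U₁ᶜ ∪ VH)ᶜ, isCut_btw G _, ?_, ?_⟩
      · intro N hN
        obtain ⟨B, rfl⟩ := hN.eq_btw
        have := hmin1 B
        linarith [k2, hm, hmin1 B]
      · intro hmem
        have h2 := (mem_cut_iff G hadjuv).mp hmem
        simp [huH, hvH] at h2
    · -- use U₁ ∪ VH
      have hm : (∑ e ∈ btw G (VH \ U) VHᶜ, |θ e|) ≤ ∑ e ∈ btw G U (VH \ U), θ e := by
        rwa [min_eq_right hle] at hc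
      refine ⟨btw G (U₁ ∪ VH) (U₁ ∪ VH)ᶜ, isCut_btw G _, ?_, ?_⟩
      · intro N hN
        obtain ⟨B, rfl⟩ := hN.eq_btw
        linarith [k1, hm, hmin1 B]
      · intro hmem
        have h2 := (mem_cut_iff G hadjuv).mp hmem
        simp [huH, hvH] at h2
  · refine ⟨btw G U₀ U₀ᶜ, isCut_btw G _, ?_, hsplit⟩
    intro N hN
    obtain ⟨B, rfl⟩ := hN.eq_btw
    exact hmin B
end

section
/- Let λ be a dual feasible cycle packing for G (i.e. λ_C ≥ 0 for every conflicted cycle C of G and Σ_{C : e ∈ C} λ_C ≤ |θ_e| for every edge e ∈ E), let x̄ ∈ MC(G), and define the duality gap γ := ⟨θ, x̄⟩ − Σ_C λ_C − Σ_{e ∈ E⁻} θ_e. If f ∈ E satisfies γ < θ̃_f, where θ̃_f is the reduced cost of f with respect to λ, then every optimal solution x* of the multicut problem min_{x ∈ MC(G)} ⟨θ, x⟩ satisfies x*_f = 0. -/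
/-!
For a multicut `M`, the sum of `|θ e|` over the edges on which `M` differs from the cut `E⁻`
equals `⟨θ, M⟩ - ∑_{E⁻} θ`. A cycle is never cut in exactly one edge, so every conflicted cycle
contains such an edge: either its negative edge is uncut, or a second, nonnegative, edge is cut.
Hence the packing `λ` is paid for out of that sum, and `⟨θ, M⟩ - ∑ λ - ∑_{E⁻} θ` bounds the sum
of the (nonnegative) reduced costs over those edges. If `f` lay in an optimal `M`, then
`θ̃_f > γ ≥ 0` would force `θ f > 0`, so `f` is such an edge and
`θ̃_f ≤ ⟨θ, M⟩ - ∑ λ - ∑_{E⁻} θ ≤ γ`.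
-/

variable {V : Type} [Fintype V] [DecidableEq V]

/-- `C` is the edge set of a cycle of `G`. -/
def IsCycleEdgeSet (G : SimpleGraph V) (C : Finset (Sym2 V)) : Prop :=
  ∃ (a : V) (w : G.Walk a a), w.IsCycle ∧ C = w.edges.toFinset

open Finset

namespace SimpleGraph.Walk

variable {W α : Type*} {G : SimpleGraph W}

lemma apply_eq_of_forall_dart {f : W → α} {a b : W} (p : G.Walk a b)
    (h : ∀ d ∈ p.darts, f d.fst = f d.snd) : f a = f b := by
  induction p with
  | nil => rfl
  | cons _ q ih =>
    simp only [darts_cons, List.mem_cons, forall_eq_or_imp] at h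
    exact h.1.trans (ih h.2)

lemma apply_ne_of_countP_eq_one [DecidableEq α] {f : W → α} {a b : W} (p : G.Walk a b)
    (h : p.darts.countP (fun d => f d.fst ≠ f d.snd) = 1) : f a ≠ f b := by
  induction p with
  | nil => simp at h
  | @cons u v _ _ q ih =>
    rw [darts_cons, List.countP_cons] at h
    by_cases huv : f u = f v
    · simp only [huv, ne_eq, not_true_eq_false, decide_false, Bool.false_eq_true, ↓reduceIte,
        add_zero] at h
      exact huv ▸ ih h
    · have hq : ∀ d ∈ q.darts, f d.fst = f d.snd := by simpa [huv] using h
      exact fun hub => huv (hub.trans (q.apply_eq_of_forall_dart hq).symm)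

end SimpleGraph.Walk

section Multicut

variable {G : SimpleGraph V} [DecidableRel G.Adj]

lemma IsCycleEdgeSet.subset_edgeFinset {C : Finset (Sym2 V)} (hC : IsCycleEdgeSet G C) :
    C ⊆ G.edgeFinset := by
  obtain ⟨a, w, -, rfl⟩ := hC
  intro e he
  exact G.mem_edgeFinset.2 (w.edges_subset_edgeSet (List.mem_toFinset.1 he))

lemma IsMulticut.card_filter_mem_ne_one {M C : Finset (Sym2 V)} (hM : IsMulticut G M)
    (hC : IsCycleEdgeSet G C) : (C.filter (· ∈ M)).card ≠ 1 := by
  obtain ⟨-, f, hf⟩ := hM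
  obtain ⟨a, w, hw, rfl⟩ := hC
  intro h1
  refine w.apply_ne_of_countP_eq_one (f := f) ?_ rfl
  have hcount : w.darts.countP (fun d => f d.fst ≠ f d.snd) = w.edges.countP (· ∈ M) := by
    rw [SimpleGraph.Walk.edges, List.countP_map]
    exact List.countP_congr fun d _ => by simp [SimpleGraph.Dart.edge, hf d.fst d.snd d.adj]
  rw [hcount, List.countP_eq_length_filter, ← h1,
    ← List.toFinset_card_of_nodup (hw.edges_nodup.filter _), List.toFinset_filter]
  simp

end Multicut

section Packing

variable {β ι : Type*} [DecidableEq β] [Fintype ι] {cyc : ι → Finset β} {lam : ι → ℝ}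

def cycleLoad (cyc : ι → Finset β) (lam : ι → ℝ) (e : β) : ℝ :=
  ∑ i ∈ univ.filter (fun i => e ∈ cyc i), lam i

lemma sum_le_sum_cycleLoad (hlam : ∀ i, 0 ≤ lam i) {T : Finset β}
    (hT : ∀ i, ∃ e ∈ cyc i, e ∈ T) : ∑ i, lam i ≤ ∑ e ∈ T, cycleLoad cyc lam e := by
  simp only [cycleLoad, sum_filter]
  rw [sum_comm]
  refine sum_le_sum fun i _ => ?_
  obtain ⟨e, heC, heT⟩ := hT i
  calc lam i = if e ∈ cyc i then lam i else 0 := (if_pos heC).symm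
    _ ≤ ∑ e ∈ T, if e ∈ cyc i then lam i else 0 :=
      single_le_sum (f := fun e => if e ∈ cyc i then lam i else 0)
        (fun _ _ => by split_ifs <;> simp [hlam i]) heT

end Packing

section Duality

variable {G : SimpleGraph V} [DecidableRel G.Adj] {θ : Sym2 V → ℝ}

/-- The edges on which `M` differs from the cut `E⁻`. -/
noncomputable def excessEdges (G : SimpleGraph V) [DecidableRel G.Adj] (θ : Sym2 V → ℝ)
    (M : Finset (Sym2 V)) : Finset (Sym2 V) :=
  G.edgeFinset.filter fun e => e ∈ M ↔ 0 ≤ θ e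

lemma sum_abs_excessEdges {M : Finset (Sym2 V)} (hM : M ⊆ G.edgeFinset) :
    ∑ e ∈ excessEdges G θ M, |θ e|
      = ∑ e ∈ M, θ e - ∑ e ∈ G.edgeFinset.filter (fun e => θ e < 0), θ e := by
  have hsumM : ∑ e ∈ M, θ e = ∑ e ∈ G.edgeFinset, if e ∈ M then θ e else 0 := by
    rw [← sum_filter, filter_mem_eq_inter, inter_eq_right.2 hM]
  rw [hsumM, excessEdges]
  simp only [sum_filter, ← sum_sub_distrib]
  refine sum_congr rfl fun e _ => ?_
  by_cases he : e ∈ M <;> by_cases hθ : θ e < 0 <;>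
    simp [he, hθ, abs_of_neg, abs_of_nonneg, le_of_not_gt]

lemma IsMulticut.exists_mem_excessEdges {M C : Finset (Sym2 V)} (hM : IsMulticut G M)
    (hC : IsCycleEdgeSet G C) (hconf : (C.filter fun e => θ e < 0).card = 1) :
    ∃ e ∈ C, e ∈ excessEdges G θ M := by
  obtain ⟨e₀, he₀⟩ := card_eq_one.1 hconf
  have he₀C : e₀ ∈ C ∧ θ e₀ < 0 := mem_filter.1 (he₀ ▸ mem_singleton_self e₀)
  have hCE := hC.subset_edgeFinset
  by_cases he₀M : e₀ ∈ M
  · have hcard : 1 < (C.filter (· ∈ M)).card :=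
      lt_of_le_of_ne (card_pos.2 ⟨e₀, mem_filter.2 ⟨he₀C.1, he₀M⟩⟩)
        (hM.card_filter_mem_ne_one hC).symm
    obtain ⟨e, he, hne⟩ := exists_mem_ne hcard e₀
    obtain ⟨heC, heM⟩ := mem_filter.1 he
    have hθe : 0 ≤ θ e := not_lt.1 fun hneg =>
      hne (mem_singleton.1 (he₀ ▸ mem_filter.2 ⟨heC, hneg⟩))
    exact ⟨e, heC, mem_filter.2 ⟨hCE heC, iff_of_true heM hθe⟩⟩
  · exact ⟨e₀, he₀C.1, mem_filter.2 ⟨hCE he₀C.1, iff_of_false he₀M he₀C.2.not_ge⟩⟩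

variable {ι : Type} [Fintype ι] {cyc : ι → Finset (Sym2 V)} {lam : ι → ℝ}

lemma IsMulticut.sum_excessEdges_le_gap (hcyc : ∀ i, IsCycleEdgeSet G (cyc i))
    (hconf : ∀ i, ((cyc i).filter (fun e => θ e < 0)).card = 1) (hlam : ∀ i, 0 ≤ lam i)
    {M : Finset (Sym2 V)} (hM : IsMulticut G M) :
    ∑ e ∈ excessEdges G θ M, (|θ e| - cycleLoad cyc lam e)
      ≤ ∑ e ∈ M, θ e - ∑ i, lam i - ∑ e ∈ G.edgeFinset.filter (fun e => θ e < 0), θ e := by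
  have hpack := sum_le_sum_cycleLoad hlam fun i => hM.exists_mem_excessEdges (hcyc i) (hconf i)
  rw [sum_sub_distrib, sum_abs_excessEdges hM.1]
  linarith

end Duality

theorem stmt_14_general (G : SimpleGraph V) [DecidableRel G.Adj] (θ : Sym2 V → ℝ)
    (ι : Type) [Fintype ι] (cyc : ι → Finset (Sym2 V))
    (hcyc : ∀ i, IsCycleEdgeSet G (cyc i))
    (hconf : ∀ i, ((cyc i).filter (fun e => θ e < 0)).card = 1)
    (lam : ι → ℝ) (hlam : ∀ i, 0 ≤ lam i)
    (hfeas : ∀ e ∈ G.edgeFinset,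
      ∑ i ∈ Finset.univ.filter (fun i => e ∈ cyc i), lam i ≤ |θ e|)
    (xbar : Finset (Sym2 V)) (hxbar : IsMulticut G xbar)
    (tθ : Sym2 V → ℝ)
    (htθ : ∀ e, tθ e =
      (|θ e| - ∑ i ∈ Finset.univ.filter (fun i => e ∈ cyc i), lam i) * Real.sign (θ e))
    (f : Sym2 V)
    (hgap : (∑ e ∈ xbar, θ e) - (∑ i, lam i)
        - (∑ e ∈ G.edgeFinset.filter (fun e => θ e < 0), θ e) < tθ f) :
    ∀ M, IsMulticut G M → (∀ N, IsMulticut G N → ∑ e ∈ M, θ e ≤ ∑ e ∈ N, θ e) →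
      f ∉ M := by
  intro M hM hopt hfM
  have hreduced : ∀ N, ∀ e ∈ excessEdges G θ N, 0 ≤ |θ e| - cycleLoad cyc lam e :=
    fun _ e he => sub_nonneg.2 (hfeas e (filter_subset _ _ he))
  have hfE : f ∈ G.edgeFinset := hM.1 hfM
  -- `tθ f > γ ≥ 0` forces `θ f > 0`, i.e. `f ∈ excessEdges G θ M` and `tθ f = |θ f| - load f`
  have hγ := (sum_nonneg (hreduced xbar)).trans (hxbar.sum_excessEdges_le_gap hcyc hconf hlam)
  have hθf : 0 < θ f := by
    by_contra! hθf
    have hsign : Real.sign (θ f) ≤ 0 := by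
      rcases hθf.lt_or_eq with h | h
      · simp [Real.sign_of_neg h]
      · simp [h]
    have := mul_nonpos_of_nonneg_of_nonpos (sub_nonneg.2 (hfeas f hfE)) hsign
    linarith [htθ f]
  have hf_excess : f ∈ excessEdges G θ M := mem_filter.2 ⟨hfE, iff_of_true hfM hθf.le⟩
  have hf_le := single_le_sum (hreduced M) hf_excess
  have hM_gap := hM.sum_excessEdges_le_gap hcyc hconf hlam
  have hopt_xbar := hopt xbar hxbar
  rw [htθ f, Real.sign_of_pos hθf, mul_one] at hgap
  simp only [cycleLoad] at hf_le hM_gap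
  linarith

/-- reduced cost fixing for the multicut problem.  If the duality gap
`γ = ⟨θ, x̄⟩ − Σ_C λ_C − Σ_{e ∈ E⁻} θ_e` of a primal multicut `x̄` and a dual feasible
conflicted-cycle packing `λ` satisfies `γ < θ̃_f`, then every optimal multicut avoids `f`. -/
theorem stmt_14 (G : SimpleGraph V) [DecidableRel G.Adj] (θ : Sym2 V → ℝ)
    (ι : Type) [Fintype ι] (cyc : ι → Finset (Sym2 V))
    (hcyc : ∀ i, IsCycleEdgeSet G (cyc i))
    (hconf : ∀ i, ((cyc i).filter (fun e => θ e < 0)).card = 1)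
    (lam : ι → ℝ) (hlam : ∀ i, 0 ≤ lam i)
    (hfeas : ∀ e ∈ G.edgeFinset,
      ∑ i ∈ Finset.univ.filter (fun i => e ∈ cyc i), lam i ≤ |θ e|)
    (xbar : Finset (Sym2 V)) (hxbar : IsMulticut G xbar)
    (tθ : Sym2 V → ℝ)
    (htθ : ∀ e, tθ e =
      (|θ e| - ∑ i ∈ Finset.univ.filter (fun i => e ∈ cyc i), lam i) * Real.sign (θ e))
    (f : Sym2 V) (hf : f ∈ G.edgeFinset)
    (hgap : (∑ e ∈ xbar, θ e) - (∑ i, lam i)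
        - (∑ e ∈ G.edgeFinset.filter (fun e => θ e < 0), θ e) < tθ f) :
    ∀ M, IsMulticut G M → (∀ N, IsMulticut G N → ∑ e ∈ M, θ e ≤ ∑ e ∈ N, θ e) →
      f ∉ M :=
  stmt_14_general G θ ι cyc hcyc hconf lam hlam hfeas xbar hxbar tθ htθ f hgap
end

section
/- Let u, v ∈ V with uv ∈ E and θ_{uv} ≥ 0. If θ_{uv} ≥ Σ_{e ∈ δ({u,v}) ∩ E⁺} θ_e − Σ_{w ∈ V, w ≠ u,v, uw ∈ E⁺, vw ∈ E⁺} min{θ_{uw}, θ_{vw}}, then there exists an optimal solution x* of the multicut problem min_{x ∈ MC(G)} ⟨θ, x⟩ with x*_{uv} = 0. -/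
/-!
Take an optimal multicut `M`. If `uv ∈ M`, split `{u, v}` off as a block of its own: this uncuts
`uv` and additionally cuts `δ({u, v}) \ M`, so the cost changes by `θ(δ({u, v}) \ M) - θ_uv`.
Since `u` and `v` lie in different blocks of `M`, every triangle `uvw` with `θ_uw, θ_vw ≥ 0` has
`uw ∈ M` or `vw ∈ M`; hence `θ(δ({u, v}) \ M) ≤ θ(δ⁺({u, v})) - Σ_w min(θ_uw, θ_vw) ≤ θ_uv`,
and the new multicut is optimal as well.
-/

variable {V : Type} [Fintype V] [DecidableEq V]

open Finset

section SumBounds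

variable {ι κ M : Type*} [AddCommMonoid M]

theorem sum_le_sum_of_injOn [PartialOrder M] [IsOrderedAddMonoid M] {s : Finset ι} {t : Finset κ}
    {f : ι → M} {g : κ → M} (e : ι → κ) (he : Set.InjOn e s) (hst : Set.MapsTo e s t)
    (hfg : ∀ i ∈ s, f i ≤ g (e i)) (hg : ∀ j ∈ t, 0 ≤ g j) :
    ∑ i ∈ s, f i ≤ ∑ j ∈ t, g j := by
  classical
  calc ∑ i ∈ s, f i ≤ ∑ i ∈ s, g (e i) := sum_le_sum hfg
    _ = ∑ j ∈ s.image e, g j := (sum_image he).symm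
    _ ≤ ∑ j ∈ t, g j :=
      sum_le_sum_of_subset_of_nonneg (image_subset_iff.2 hst) fun j hj _ => hg j hj

theorem sum_le_sum_filter_nonneg [LinearOrder M] [IsOrderedAddMonoid M] (s : Finset ι)
    (f : ι → M) : ∑ i ∈ s, f i ≤ ∑ i ∈ s.filter (0 ≤ f ·), f i := by
  rw [← sum_filter_add_sum_filter_not s (0 ≤ f ·)]
  exact add_le_of_nonpos_right <| sum_nonpos fun i hi => le_of_not_ge (mem_filter.1 hi).2

end SumBounds

theorem IsMulticut.of_labeling {W : Type} {α : Type*} [Fintype W] {G : SimpleGraph W}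
    [DecidableRel G.Adj] {M : Finset (Sym2 W)} (f : W → α) (hM : M ⊆ G.edgeFinset)
    (hf : ∀ x y, G.Adj x y → (s(x, y) ∈ M ↔ f x ≠ f y)) :
    IsMulticut G M := by
  refine ⟨hM, ?_⟩
  cases isEmpty_or_nonempty W
  · exact ⟨id, fun x => isEmptyElim x⟩
  -- replacing each label by a chosen vertex carrying it gives a labeling by vertices
  refine ⟨fun x => Function.invFun f (f x), fun x y hxy => (hf x y hxy).trans (not_congr ?_)⟩
  refine ⟨congrArg _, fun h => ?_⟩
  simpa only [Function.invFun_eq ⟨_, rfl⟩] using congrArg f h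

theorem exists_isMulticut_forall_sum_le {W : Type} [Fintype W] (G : SimpleGraph W)
    [DecidableRel G.Adj] (θ : Sym2 W → ℝ) :
    ∃ M, IsMulticut G M ∧ ∀ N, IsMulticut G N → ∑ e ∈ M, θ e ≤ ∑ e ∈ N, θ e := by
  classical
  have hall : IsMulticut G G.edgeFinset :=
    .of_labeling id subset_rfl fun x y hxy => by simpa [hxy] using hxy.ne
  obtain ⟨M, hM, hmin⟩ := (G.edgeFinset.powerset.filter (IsMulticut G)).exists_min_image
    (fun M => ∑ e ∈ M, θ e) ⟨_, mem_filter.2 ⟨mem_powerset.2 subset_rfl, hall⟩⟩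
  exact ⟨M, (mem_filter.1 hM).2, fun N hN => hmin N (mem_filter.2 ⟨mem_powerset.2 hN.1, hN⟩)⟩

variable {G : SimpleGraph V} [DecidableRel G.Adj]

theorem mk_mem_cutδ_iff {U : Finset V} {x y : V} :
    s(x, y) ∈ cutδ G U ↔ G.Adj x y ∧ (x ∈ U ↔ y ∉ U) := by
  rw [cutδ, _root_.btw, mem_filter, SimpleGraph.mem_edgeFinset, SimpleGraph.mem_edgeSet]
  simp only [mem_compl, Sym2.eq_iff]
  grind

noncomputable def positiveTriangleApexes (G : SimpleGraph V) [DecidableRel G.Adj]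
    (θ : Sym2 V → ℝ) (u v : V) : Finset V :=
  univ.filter fun w => w ≠ u ∧ w ≠ v ∧
    G.Adj u w ∧ 0 ≤ θ (s(u, w)) ∧ G.Adj v w ∧ 0 ≤ θ (s(v, w))

namespace IsMulticut

variable {M : Finset (Sym2 V)}

theorem mem_or_mem_of_mem (hM : IsMulticut G M) {u v w : V} (huv : s(u, v) ∈ M)
    (huw : G.Adj u w) (hvw : G.Adj v w) : s(u, w) ∈ M ∨ s(v, w) ∈ M := by
  obtain ⟨hsub, f, hf⟩ := hM
  have hfuv : f u ≠ f v := (hf u v (by simpa using hsub huv)).1 huv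
  rw [hf u w huw, hf v w hvw]
  by_contra! h
  exact hfuv (h.1.trans h.2.symm)

-- The partition of `M` with `{u, v}` split off as a block of its own.
theorem erase_union_cutδ_sdiff (hM : IsMulticut G M) (u v : V) :
    IsMulticut G (M.erase s(u, v) ∪ (cutδ G {u, v} \ M)) := by
  obtain ⟨hsub, f, hf⟩ := hM
  refine .of_labeling (fun x => if x ∈ ({u, v} : Finset V) then none else some (f x))
    (union_subset ((erase_subset _ _).trans hsub) (sdiff_subset.trans (filter_subset _ _)))
    fun x y hxy => ?_
  simp only [mem_union, mem_erase, mem_sdiff, mk_mem_cutδ_iff, hf x y hxy]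
  simp only [mem_insert, mem_singleton]
  split_ifs <;> grind

-- Each apex `w` contributes a cut edge `uw` or `vw` of `δ({u, v})`, and distinct apexes
-- contribute distinct edges.
theorem sum_min_le_sum_cutδ_inter (hM : IsMulticut G M) {θ : Sym2 V → ℝ} {u v : V}
    (huv : s(u, v) ∈ M) :
    ∑ w ∈ positiveTriangleApexes G θ u v, min (θ s(u, w)) (θ s(v, w)) ≤
      ∑ e ∈ (cutδ G {u, v}).filter (0 ≤ θ ·) ∩ M, θ e := by
  classical
  refine sum_le_sum_of_injOn (fun w => if s(u, w) ∈ M then s(u, w) else s(v, w))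
    ?_ ?_ ?_ fun e he => (mem_filter.1 (mem_inter.1 he).1).2
  · intro w₁ hw₁ w₂ hw₂ h
    simp only [positiveTriangleApexes, coe_filter, mem_univ, true_and, Set.mem_ofPred_eq] at hw₁ hw₂
    dsimp only at h
    split_ifs at h <;> simp only [Sym2.eq_iff] at h <;> grind
  · intro w hw
    simp only [positiveTriangleApexes, coe_filter, mem_univ, true_and, Set.mem_ofPred_eq] at hw
    obtain ⟨hwu, hwv, huw, hθuw, hvw, hθvw⟩ := hw
    have := hM.mem_or_mem_of_mem huv huw hvw
    rw [mem_coe]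
    dsimp only
    split_ifs with h
    · simp [mk_mem_cutδ_iff, *]
    · simp [mk_mem_cutδ_iff, this.resolve_left h, *]
  · intro w _
    split_ifs
    exacts [min_le_left _ _, min_le_right _ _]

theorem sum_cutδ_sdiff_le (hM : IsMulticut G M) {θ : Sym2 V → ℝ} {u v : V}
    (huv : s(u, v) ∈ M)
    (hcrit : ∑ e ∈ (cutδ G {u, v}).filter (0 ≤ θ ·), θ e -
        ∑ w ∈ positiveTriangleApexes G θ u v, min (θ s(u, w)) (θ s(v, w)) ≤ θ s(u, v)) :
    ∑ e ∈ cutδ G {u, v} \ M, θ e ≤ θ s(u, v) := by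
  set D := cutδ G {u, v}
  have hpos : ∑ e ∈ D \ M, θ e ≤ ∑ e ∈ D.filter (0 ≤ θ ·) \ M, θ e := by
    refine (sum_le_sum_filter_nonneg _ θ).trans_eq (sum_congr ?_ fun _ _ => rfl)
    ext e
    simp only [mem_filter, mem_sdiff]
    tauto
  have hsplit := sum_inter_add_sum_sdiff (D.filter (0 ≤ θ ·)) M θ
  have htri := hM.sum_min_le_sum_cutδ_inter (θ := θ) huv
  linarith

end IsMulticut

theorem stmt_16_general (G : SimpleGraph V) [DecidableRel G.Adj] (θ : Sym2 V → ℝ)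
    (u v : V)
    (hcrit : (∑ e ∈ (cutδ G {u, v}).filter (fun e => 0 ≤ θ e), θ e)
        - (∑ w ∈ Finset.univ.filter (fun w => w ≠ u ∧ w ≠ v ∧
              G.Adj u w ∧ 0 ≤ θ (s(u, w)) ∧ G.Adj v w ∧ 0 ≤ θ (s(v, w))),
            min (θ (s(u, w))) (θ (s(v, w))))
        ≤ θ (s(u, v))) :
    ∃ M, IsMulticut G M ∧
      (∀ N, IsMulticut G N → ∑ e ∈ M, θ e ≤ ∑ e ∈ N, θ e) ∧ s(u, v) ∉ M := by
  obtain ⟨M, hM, hopt⟩ := exists_isMulticut_forall_sum_le G θ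
  by_cases huvM : s(u, v) ∉ M
  · exact ⟨M, hM, hopt, huvM⟩
  rw [not_not] at huvM
  refine ⟨M.erase s(u, v) ∪ (cutδ G {u, v} \ M), hM.erase_union_cutδ_sdiff u v,
    fun N hN => le_trans ?_ (hopt N hN), ?_⟩
  · rw [sum_union (disjoint_sdiff.mono_left (erase_subset _ _)), sum_erase_eq_sub huvM]
    linarith [hM.sum_cutδ_sdiff_le huvM hcrit]
  · simp [mk_mem_cutδ_iff]

/-- refined single-edge multicut criterion with triangle correction term. -/
theorem stmt_16 (G : SimpleGraph V) [DecidableRel G.Adj] (θ : Sym2 V → ℝ)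
    (u v : V) (huv : G.Adj u v) (hθuv : 0 ≤ θ (s(u, v)))
    (hcrit : (∑ e ∈ (cutδ G {u, v}).filter (fun e => 0 ≤ θ e), θ e)
        - (∑ w ∈ Finset.univ.filter (fun w => w ≠ u ∧ w ≠ v ∧
              G.Adj u w ∧ 0 ≤ θ (s(u, w)) ∧ G.Adj v w ∧ 0 ≤ θ (s(v, w))),
            min (θ (s(u, w))) (θ (s(v, w))))
        ≤ θ (s(u, v))) :
    ∃ M, IsMulticut G M ∧
      (∀ N, IsMulticut G N → ∑ e ∈ M, θ e ≤ ∑ e ∈ N, θ e) ∧ s(u, v) ∉ M :=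
  stmt_16_general G θ u v hcrit
end
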